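/- arXiv:2005.08233 — 12 statements merged into one kernel-verified Lean document; each statement's English description precedes it below -/
import Mathlib

section
/- Let G be a paratopological group with a suitable set S (i.e., S is a discrete subspace of G, S ∪ {e} is closed in G, and the subgroup generated by S is dense in G). Then G is a T1-space or G is a two-element group. -/
/-- A suitable set for a paratopological group: a discrete subspace `S` such that
`S ∪ {1}` is closed and the subgroup generated by `S` is dense. -/
def IsSuitable {G : Type*} [Group G] [TopologicalSpace G] (S : Set G) : Prop :=
  DiscreteTopology S ∧ IsClosed (S ∪ {1}) ∧ Dense (Subgroup.closure S : Set G)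

theorem stmt0 {G : Type*} [Group G] [TopologicalSpace G] [ContinuousMul G]
    (S : Set G) (hS : IsSuitable S) :
    T1Space G ∨ Nat.card G = 2 := by
  obtain ⟨hdisc, hclosed, hdense⟩ := hS
  by_cases hT : ∀ x : G, x ∈ closure ({1} : Set G) → x = 1
  · left
    have h1 : IsClosed ({1} : Set G) := by
      have : closure ({1} : Set G) = {1} :=
        subset_antisymm (fun x hx => hT x hx) subset_closure
      rw [← this]; exact isClosed_closure
    refine ⟨fun x => ?_⟩
    have hx : ({x} : Set G) = (Homeomorph.mulLeft x) '' {1} := by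
      simp
    rw [hx]
    exact (Homeomorph.mulLeft x).isClosedMap _ h1
  · right
    push_neg at hT
    obtain ⟨g, hg, hg1⟩ := hT
    -- key discreteness fact
    have disc : ∀ a ∈ S, ∀ b ∈ S, a ∈ closure ({b} : Set G) → a = b := by
      intro a ha b hb hab
      obtain ⟨U, hU, hUS⟩ :=
        isOpen_induced_iff.mp (isOpen_discrete ({(⟨a, ha⟩ : S)} : Set S))
      have haU : a ∈ U := by
        have : (⟨a, ha⟩ : S) ∈ Subtype.val ⁻¹' U := by rw [hUS]; rfl
        exact this
      have hbU : b ∈ U := by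
        rcases mem_closure_iff.mp hab U hU haU with ⟨y, hyU, hy⟩
        simp only [Set.mem_singleton_iff] at hy
        rwa [hy] at hyU
      have : (⟨b, hb⟩ : S) ∈ Subtype.val ⁻¹' U := hbU
      rw [hUS] at this
      exact (congrArg Subtype.val this).symm
    -- left multiplication preserves specialization
    have spec : ∀ a x : G, x ∈ closure ({1} : Set G) → a * x ∈ closure ({a} : Set G) := by
      intro a x hx
      have h1 : (1 : G) ⤳ x := specializes_iff_mem_closure.mpr hx
      have h2 : (a * 1) ⤳ (a * x) := h1.map (continuous_mul_left a)
      rw [mul_one] at h2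
      exact h2.mem_closure
    have hsub : closure ({1} : Set G) ⊆ S ∪ {1} :=
      closure_minimal (by intro x hx; right; exact hx) hclosed
    have hgS : g ∈ S := by
      rcases hsub hg with h | h
      · exact h
      · exact absurd h hg1
    -- g * g = 1
    have hg2 : g * g = 1 := by
      have hgg : g * g ∈ closure ({1} : Set G) := by
        have h1 : (1 : G) ⤳ g := specializes_iff_mem_closure.mpr hg
        have h2 : g ⤳ (g * g) := by
          have h3 : (g * 1) ⤳ (g * g) := h1.map (continuous_mul_left g)
          rwa [mul_one] at h3
        exact (h1.trans h2).mem_closure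
      rcases hsub hgg with h | h
      · exfalso
        have heq := disc _ h _ hgS (spec g g hg)
        exact hg1 (mul_left_cancel (a := g) (b := g) (c := 1) (by rw [mul_one, heq]))
      · exact h
    -- every element of S equals g
    have hSg : ∀ s ∈ S, s = g := by
      intro s hs
      have hsgc : s * g ∈ closure ({s} : Set G) := spec s g hg
      have hsg : s * g ∈ S ∪ {1} :=
        closure_minimal (Set.singleton_subset_iff.mpr (Set.mem_union_left _ hs)) hclosed hsgc
      rcases hsg with h | h
      · exfalso
        have heq := disc _ h _ hs hsgc
        exact hg1 (mul_left_cancel (a := s) (b := g) (c := 1) (by rw [mul_one, heq]))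
      · -- s * g = 1, so s = g⁻¹ = g
        have : s = g⁻¹ := eq_inv_of_mul_eq_one_left h
        rw [this, inv_eq_of_mul_eq_one_left hg2]
    -- the subgroup {1, g}
    have hginv : g⁻¹ = g := inv_eq_of_mul_eq_one_left hg2
    let H : Subgroup G :=
      { carrier := {1, g}
        one_mem' := Or.inl rfl
        mul_mem' := by
          rintro a b (rfl | ha) (rfl | hb) <;>
            simp_all [Set.mem_insert_iff, hg2]
        inv_mem' := by
          rintro a (rfl | ha) <;> simp_all [Set.mem_insert_iff, hginv] }
    have hSH : Subgroup.closure S ≤ H := by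
      rw [Subgroup.closure_le]
      intro s hs
      right
      exact hSg s hs
    have huniv : (Set.univ : Set G) ⊆ {1, g} := by
      have h1 : closure ((Subgroup.closure S : Set G)) = Set.univ := hdense.closure_eq
      have h2 : closure ((Subgroup.closure S : Set G)) ⊆ closure ({1, g} : Set G) :=
        closure_mono hSH
      have h3 : ({1, g} : Set G) ⊆ closure ({1} : Set G) := by
        rintro x (rfl | hx)
        · exact subset_closure rfl
        · rwa [Set.mem_singleton_iff.mp hx]
      have h4 : closure ({1, g} : Set G) ⊆ closure (closure ({1} : Set G)) :=
        closure_mono h3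
      rw [closure_closure] at h4
      have h5 : closure ({1} : Set G) ⊆ S ∪ {1} := hsub
      intro x _
      have hx : x ∈ S ∪ {1} := h5 (h4 (h2 (h1 ▸ Set.mem_univ x)))
      rcases hx with hx | hx
      · right; exact Set.mem_singleton_iff.mpr (hSg x hx)
      · left; exact hx
    rw [Nat.card_eq_two_iff]
    exact ⟨1, g, Ne.symm hg1, Set.eq_univ_of_univ_subset huniv⟩
end

section
/- Let G = ℤ be endowed with the topology generated by the base {U_{n,m} : n, m ∈ ℤ} where U_{n,m} = {k ∈ ℤ : k = n or k ≥ m}. Then G is a paratopological group which is not Hausdorff, and {-1, 0} is a suitable set for G. -/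
/-!
Every nonempty open set contains a tail `[m, ∞)`, so any two nonempty open sets meet: the space
is irreducible, hence not Hausdorff. If `S` is bounded above by `b`, the open sets
`{x} ∪ [b + 1, ∞)` meet `S` only in `x`, so `S` is discrete and closed. Finally `-1` alone
generates `ℤ`.
-/

open TopologicalSpace Set Topology

-- `ℤ` already carries the discrete topology as an instance, so this one is always passed
-- explicitly or bound locally.
abbrev pointTailTopology : TopologicalSpace ℤ :=
  generateFrom {U | ∃ n m : ℤ, U = {k | k = n ∨ m ≤ k}}

namespace pointTailTopology

theorem isOpen_pointOrTail (n m : ℤ) : IsOpen[pointTailTopology] {k | k = n ∨ m ≤ k} :=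
  GenerateOpen.basic _ ⟨n, m, rfl⟩

theorem exists_Ici_subset_of_isOpen {U : Set ℤ} (hU : IsOpen[pointTailTopology] U)
    (hne : U.Nonempty) : ∃ m, Ici m ⊆ U := by
  induction hU with
  | basic u hu =>
    obtain ⟨n, m, rfl⟩ := hu
    exact ⟨m, fun k hk => Or.inr hk⟩
  | univ => exact ⟨0, subset_univ _⟩
  | inter u v _ _ ihu ihv =>
    obtain ⟨m₁, hm₁⟩ := ihu (hne.mono inter_subset_left)
    obtain ⟨m₂, hm₂⟩ := ihv (hne.mono inter_subset_right)
    exact ⟨max m₁ m₂, subset_inter ((Ici_subset_Ici.2 (le_max_left _ _)).trans hm₁)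
      ((Ici_subset_Ici.2 (le_max_right _ _)).trans hm₂)⟩
  | sUnion S _ ih =>
    obtain ⟨x, u, hu, hxu⟩ := hne
    obtain ⟨m, hm⟩ := ih u hu ⟨x, hxu⟩
    exact ⟨m, hm.trans (subset_sUnion_of_mem hu)⟩

theorem preirreducibleSpace : @PreirreducibleSpace ℤ pointTailTopology :=
  letI := pointTailTopology
  .of_forall_nonempty_inter fun U V hU hV hUne hVne => by
    obtain ⟨m₁, hm₁⟩ := exists_Ici_subset_of_isOpen hU hUne
    obtain ⟨m₂, hm₂⟩ := exists_Ici_subset_of_isOpen hV hVne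
    exact ⟨max m₁ m₂, hm₁ (mem_Ici.2 (le_max_left _ _)), hm₂ (mem_Ici.2 (le_max_right _ _))⟩

theorem not_t2Space : ¬ @T2Space ℤ pointTailTopology := fun _ =>
  letI := pointTailTopology
  have := preirreducibleSpace
  not_preirreducible_nontrivial_t2 ℤ

theorem continuousAdd : @ContinuousAdd ℤ pointTailTopology _ := by
  let := pointTailTopology
  refine ⟨continuous_generateFrom_iff.2 ?_⟩
  rintro _ ⟨n, m, rfl⟩
  refine isOpen_prod_iff.2 fun a b hab => ?_
  refine ⟨{k | k = a ∨ max (m - b) 0 ≤ k}, {k | k = b ∨ max (m - a) m ≤ k},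
    isOpen_pointOrTail _ _, isOpen_pointOrTail _ _, Or.inl rfl, Or.inl rfl, ?_⟩
  rintro ⟨x, y⟩ ⟨hx | hx, hy | hy⟩ <;> simp only [mem_preimage, mem_ofPred_eq] at * <;> omega

theorem isClosed_of_bddAbove {S : Set ℤ} (hS : BddAbove S) : IsClosed[pointTailTopology] S := by
  let := pointTailTopology
  obtain ⟨b, hb⟩ := hS
  refine isOpen_compl_iff.1 (isOpen_iff_forall_mem_open.2 fun x hx => ?_)
  refine ⟨{k | k = x ∨ b + 1 ≤ k}, ?_, isOpen_pointOrTail _ _, Or.inl rfl⟩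
  rintro k (rfl | hk) hkS
  · exact hx hkS
  · linarith [hb hkS]

theorem discreteTopology_of_bddAbove {S : Set ℤ} (hS : BddAbove S) :
    @DiscreteTopology S (@instTopologicalSpaceSubtype ℤ _ pointTailTopology) := by
  let := pointTailTopology
  obtain ⟨b, hb⟩ := hS
  refine discreteTopology_iff_isOpen_singleton.2 fun x => ⟨_, isOpen_pointOrTail x (b + 1), ?_⟩
  ext y
  simp only [mem_preimage, mem_ofPred_eq, mem_singleton_iff, Subtype.ext_iff]
  have := hb y.2
  omega

end pointTailTopology

theorem Int.addSubgroupClosure_eq_top_of_neg_one_mem {S : Set ℤ} (h : -1 ∈ S) :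
    AddSubgroup.closure S = ⊤ :=
  eq_top_iff.2 <| Int.zmultiples_one.ge.trans <| AddSubgroup.zmultiples_le_of_mem <| by
    simpa using neg_mem (AddSubgroup.subset_closure h)

open pointTailTopology in
theorem stmt2 (τ : TopologicalSpace ℤ)
    (hτ : τ = TopologicalSpace.generateFrom
      {U : Set ℤ | ∃ n m : ℤ, U = {k : ℤ | k = n ∨ m ≤ k}}) :
    @ContinuousAdd ℤ τ _ ∧ ¬ @T2Space ℤ τ ∧
    -- `{-1, 0}` is a suitable set for `G`:
    @DiscreteTopology ({-1, 0} : Set ℤ) (@instTopologicalSpaceSubtype ℤ _ τ) ∧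
    @IsClosed ℤ τ (({-1, 0} : Set ℤ) ∪ {0}) ∧
    @Dense ℤ τ (AddSubgroup.closure ({-1, 0} : Set ℤ) : Set ℤ) := by
  subst hτ
  have hbdd : BddAbove ({-1, 0} : Set ℤ) := (finite_insert.2 (finite_singleton 0)).bddAbove
  refine ⟨continuousAdd, not_t2Space, discreteTopology_of_bddAbove hbdd,
    isClosed_of_bddAbove (hbdd.union bddAbove_singleton), ?_⟩
  rw [Int.addSubgroupClosure_eq_top_of_neg_one_mem (mem_insert _ _), AddSubgroup.coe_top]
  exact @dense_univ ℤ pointTailTopology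
end

section
/- Let G be a countably compact infinite locally finite T1 paratopological group without non-trivial convergent sequences. Then G has no suitable set. -/
/-- Every infinite subset has an accumulation point. -/
def CountablyCompactAcc (X : Type*) [TopologicalSpace X] : Prop :=
  ∀ s : Set X, s.Infinite → ∃ x : X, ∀ U ∈ nhds x, (U ∩ s).Infinite

theorem stmt3 {G : Type*} [Group G] [TopologicalSpace G] [ContinuousMul G] [T1Space G]
    (hcc : CountablyCompactAcc G) (hinf : Infinite G)
    (hlf : ∀ F : Finset G, (Subgroup.closure (F : Set G) : Set G).Finite)
    (hnoconv : ¬ ∃ (u : ℕ → G) (x : G), Function.Injective u ∧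
      Filter.Tendsto u Filter.atTop (nhds x)) :
    ¬ ∃ S : Set G, IsSuitable S := by
  rintro ⟨S, hdisc, hclosed, hdense⟩
  -- S must be infinite
  have hSinf : S.Infinite := by
    intro hfin
    have h1 : (Subgroup.closure ((hfin.toFinset : Finset G) : Set G) : Set G).Finite :=
      hlf hfin.toFinset
    rw [hfin.coe_toFinset] at h1
    have h2 : IsClosed (Subgroup.closure S : Set G) := h1.isClosed
    have h3 : (Subgroup.closure S : Set G) = Set.univ := by
      rw [← h2.closure_eq]; exact hdense.closure_eq
    rw [h3] at h1
    exact Set.infinite_univ h1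
  have f := hSinf.natEmbedding
  apply hnoconv
  refine ⟨fun n => (f n : G), 1, fun a b h => f.injective (Subtype.ext h), ?_⟩
  rw [Filter.tendsto_def]
  intro U hU
  by_contra hcon
  -- the set of indices outside U is infinite
  have hbad : {n : ℕ | (f n : G) ∉ U}.Infinite := by
    by_contra hfin
    have hfin' : {n : ℕ | (f n : G) ∉ U}.Finite := Set.not_infinite.mp hfin
    apply hcon
    rcases hfin'.bddAbove with ⟨N, hN⟩
    refine Filter.mem_atTop_sets.mpr ⟨N + 1, fun n hn => ?_⟩
    by_contra hnU
    have := hN hnU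
    omega
  set T : Set G := (fun n => (f n : G)) '' {n : ℕ | (f n : G) ∉ U} with hT
  have hTinf : T.Infinite :=
    hbad.image (Set.injOn_of_injective (fun a b h => f.injective (Subtype.ext h)))
  obtain ⟨x, hx⟩ := hcc T hTinf
  have hTS : T ⊆ S := by
    rintro y ⟨n, _, rfl⟩; exact (f n).2
  have hxcl : x ∈ closure T := by
    rw [mem_closure_iff_nhds]
    exact fun V hV => (hx V hV).nonempty
  have hxSU : x ∈ S ∪ {1} := by
    have : closure T ⊆ S ∪ {1} := by
      rw [← hclosed.closure_eq]
      exact closure_mono (hTS.trans Set.subset_union_left)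
    exact this hxcl
  rcases hxSU with hxS | hx1
  · -- x ∈ S contradicts discreteness
    have hopen : IsOpen ({(⟨x, hxS⟩ : S)} : Set S) := isOpen_discrete _
    obtain ⟨V, hVopen, hVpre⟩ := isOpen_induced_iff.mp hopen
    have hxV : x ∈ V := by
      have : (⟨x, hxS⟩ : S) ∈ (Subtype.val ⁻¹' V : Set S) := by
        rw [hVpre]; rfl
      exact this
    have hinfVT := hx V (hVopen.mem_nhds hxV)
    have hsub : V ∩ T ⊆ {x} := by
      rintro y ⟨hyV, hyT⟩
      have hyS : y ∈ S := hTS hyT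
      have : (⟨y, hyS⟩ : S) ∈ (Subtype.val ⁻¹' V : Set S) := hyV
      rw [hVpre] at this
      exact Set.mem_singleton_iff.mpr (congrArg Subtype.val this)
    exact hinfVT ((Set.finite_singleton x).subset hsub)
  · -- x = 1, but U ∩ T = ∅
    have hx1' : x = 1 := hx1
    have := hx U (hx1' ▸ hU)
    apply this
    have : U ∩ T = ∅ := by
      ext y
      simp only [Set.mem_inter_iff, Set.mem_empty_iff_false, iff_false, not_and]
      rintro hyU ⟨n, hn, rfl⟩
      exact hn hyU
    rw [this]
    exact Set.finite_empty
end

section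
/- Let G be a countably compact T1 paratopological group with a suitable set, H a Hausdorff paratopological group, and f : G → H a continuous homomorphism with dense image. Then H has a suitable set. -/
/-- Every countable open cover has a finite subcover. -/
def CountablyCompactCov (X : Type*) [TopologicalSpace X] : Prop :=
  ∀ 𝒰 : Set (Set X), 𝒰.Countable → (∀ U ∈ 𝒰, IsOpen U) → ⋃₀ 𝒰 = Set.univ →
    ∃ 𝒱 ⊆ 𝒰, 𝒱.Finite ∧ ⋃₀ 𝒱 = Set.univ

/-!
In a countably compact space a closed discrete set is finite. Applied to the closed discrete sets
`S \ interior U`, for `S` suitable in `G` and `U` a neighbourhood of `1`, this shows that `S`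
converges to `1` along the cofinite filter, and then so does its image under `f`. Hence
`T = f '' S \ {1}` is suitable in `H`: `T ∪ {1}` is a convergent family together with its limit,
so it is compact and therefore closed in the Hausdorff space `H`, which also makes `T` discrete;
and `⟨T⟩` contains `f '' ⟨S⟩`, dense because `f` is continuous with dense range.
-/

open Set Filter Topology

theorem CountablyCompactCov.countablyCompactSpace {X : Type*} [TopologicalSpace X]
    (hX : CountablyCompactCov X) : CountablyCompactSpace X := by
  refine ⟨isCountablyCompact_iff_countable_open_cover.mpr fun U hUo hcov => ?_⟩
  obtain ⟨𝒱, h𝒱U, h𝒱fin, h𝒱cov⟩ := hX (range U) (countable_range U)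
    (forall_mem_range.mpr hUo) (univ_subset_iff.mp (by simpa [sUnion_range] using hcov))
  choose! i hi using fun V (hV : V ∈ 𝒱) => h𝒱U hV
  refine ⟨(h𝒱fin.image i).toFinset, fun x _ => ?_⟩
  obtain ⟨V, hV𝒱, hxV⟩ := mem_sUnion.mp (h𝒱cov ▸ mem_univ x)
  exact mem_biUnion (by simpa using mem_image_of_mem i hV𝒱) (hi V hV𝒱 ▸ hxV)

section CountablyCompact

variable {X : Type*} [TopologicalSpace X] [CountablyCompactSpace X]

theorem IsClosed.finite_of_discreteTopology {A : Set X} (hA : IsClosed A)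
    [DiscreteTopology A] : A.Finite := by
  by_contra hinf
  obtain ⟨x, -, hx⟩ := hA.isCountablyCompact.exists_accPt_of_infinite subset_rfl hinf
  have hdisj := isClosed_and_discrete_iff.mp ⟨hA, isDiscrete_iff_discreteTopology.mpr ‹_›⟩ x
  exact hx.ne hdisj.eq_bot

theorem IsClosed.tendsto_coe_cofinite_of_union_singleton {S : Set X} {x : X}
    (hS : IsClosed (S ∪ {x})) [DiscreteTopology S] :
    Tendsto ((↑) : S → X) cofinite (𝓝 x) := by
  intro U hU
  have hclosed : IsClosed (S \ interior U) := by
    have hxU : x ∈ interior U := mem_interior_iff_mem_nhds.mpr hU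
    have := hS.sdiff (isOpen_interior (s := U))
    rwa [union_sdiff_distrib, sdiff_eq_empty.mpr (singleton_subset_iff.mpr hxU),
      union_empty] at this
  have : DiscreteTopology ↥(S \ interior U) := .of_subset ‹_› sdiff_subset
  have hfin : ((↑) ⁻¹' (S \ interior U) : Set S).Finite :=
    hclosed.finite_of_discreteTopology.preimage Subtype.val_injective.injOn
  refine mem_cofinite.mpr (hfin.subset fun s hs => ⟨s.2, fun hsU => hs ?_⟩)
  exact interior_subset (s := U) hsU

end CountablyCompact

theorem discreteTopology_range_diff_of_tendsto_cofinite {X ι : Type*} [TopologicalSpace X]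
    [T2Space X] {g : ι → X} {y : X} (hg : Tendsto g cofinite (𝓝 y)) :
    DiscreteTopology ↥(range g \ {y}) := by
  refine discreteTopology_subtype_iff'.mpr fun t ⟨⟨i, hi⟩, hty⟩ => ?_
  obtain ⟨U, W, hUo, hWo, hyU, htW, hUW⟩ := t2_separation (Ne.symm hty)
  have hfin : (range g \ U).Finite :=
    image_compl_preimage ▸ (mem_cofinite.mp (hg (hUo.mem_nhds hyU))).image g
  have hclosed : IsClosed ((range g \ U) \ {t}) := (hfin.subset sdiff_subset).isClosed
  refine ⟨W \ ((range g \ U) \ {t}), hWo.sdiff hclosed, ?_⟩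
  ext z
  constructor
  · rintro ⟨⟨hzW, hzF⟩, hzg, -⟩
    by_contra hzt
    exact hzF ⟨⟨hzg, fun hzU => disjoint_left.mp hUW hzU hzW⟩, hzt⟩
  · rintro rfl
    exact ⟨⟨htW, fun h => h.2 rfl⟩, ⟨i, hi⟩, hty⟩

theorem stmt4_general {G H : Type*} [Group G] [TopologicalSpace G]
    [Group H] [TopologicalSpace H] [T2Space H]
    (hcc : CountablyCompactCov G) (hGS : ∃ S : Set G, IsSuitable S)
    (f : G →* H) (hf : Continuous f) (hd : DenseRange f) :
    ∃ T : Set H, IsSuitable T := by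
  obtain ⟨S, hSdisc, hSclosed, hSdense⟩ := hGS
  have := hcc.countablyCompactSpace
  have hfS : Tendsto (f ∘ ((↑) : S → G)) cofinite (𝓝 1) := by
    simpa using (hf.tendsto 1).comp hSclosed.tendsto_coe_cofinite_of_union_singleton
  have hrange : range (f ∘ ((↑) : S → G)) = f '' S := by rw [range_comp, Subtype.range_coe]
  refine ⟨range (f ∘ ((↑) : S → G)) \ {1},
    discreteTopology_range_diff_of_tendsto_cofinite hfS, ?_, ?_⟩
  · rw [sdiff_union_self, union_singleton]
    exact hfS.isCompact_insert_range_of_cofinite.isClosed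
  · rw [Subgroup.closure_sdiff_one, hrange, ← MonoidHom.map_closure]
    exact hd.dense_image hf hSdense

theorem stmt4 {G H : Type*} [Group G] [TopologicalSpace G] [ContinuousMul G] [T1Space G]
    [Group H] [TopologicalSpace H] [ContinuousMul H] [T2Space H]
    (hcc : CountablyCompactCov G) (hGS : ∃ S : Set G, IsSuitable S)
    (f : G →* H) (hf : Continuous f) (hd : DenseRange f) :
    ∃ T : Set H, IsSuitable T :=
  stmt4_general hcc hGS f hf hd
end

section
/- Let G be a countably compact T1 paratopological group, S a suitable set for G, H a Hausdorff paratopological group, and f : G → H a continuous homomorphism. Then for every open neighborhood V of the identity in H, the set f(S) \ V is finite. -/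
theorem stmt5 {G H : Type*} [Group G] [TopologicalSpace G] [ContinuousMul G] [T1Space G]
    [Group H] [TopologicalSpace H] [ContinuousMul H] [T2Space H]
    (hcc : CountablyCompactAcc G) (S : Set G) (hS : IsSuitable S)
    (f : G →* H) (hf : Continuous f)
    (V : Set H) (hV : IsOpen V) (h1 : (1 : H) ∈ V) :
    ((f '' S) \ V).Finite := by
  by_contra hfin
  rw [← Set.not_infinite, not_not] at hfin
  set T : Set G := S ∩ f ⁻¹' Vᶜ with hT
  have hTinf : T.Infinite := by
    apply Set.Infinite.of_image f
    apply Set.Infinite.mono _ hfin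
    rintro y ⟨⟨s, hs, rfl⟩, hv⟩
    exact ⟨s, ⟨hs, hv⟩, rfl⟩
  obtain ⟨x, hx⟩ := hcc T hTinf
  have hxT : x ∈ closure T := by
    rw [mem_closure_iff_nhds]
    exact fun U hU => (hx U hU).nonempty
  have hxS : x ∈ S ∪ {1} := by
    have h2 := closure_mono (show T ⊆ S ∪ {1} from fun t ht => Or.inl ht.1) hxT
    rwa [hS.2.1.closure_eq] at h2
  cases hxS with
  | inl hxS =>
    haveI := hS.1
    have hop : IsOpen ({⟨x, hxS⟩} : Set S) := isOpen_discrete _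
    rw [isOpen_induced_iff] at hop
    obtain ⟨U, hUopen, hUeq⟩ := hop
    have hxU : x ∈ U := by
      have : (⟨x, hxS⟩ : S) ∈ (Subtype.val ⁻¹' U : Set S) := by rw [hUeq]; rfl
      exact this
    have hsub : U ∩ T ⊆ {x} := by
      rintro g ⟨hgU, hgS, -⟩
      have : (⟨g, hgS⟩ : S) ∈ (Subtype.val ⁻¹' U : Set S) := hgU
      rw [hUeq] at this
      exact congrArg Subtype.val this
    exact ((hx U (hUopen.mem_nhds hxU)).mono hsub) (Set.finite_singleton x)
  | inr hxS =>
    have hx1 : x = 1 := hxS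
    have hnhd : f ⁻¹' V ∈ nhds x := by
      apply hf.continuousAt.preimage_mem_nhds
      rw [hx1, f.map_one]
      exact hV.mem_nhds h1
    have hsub : f ⁻¹' V ∩ T ⊆ (∅ : Set G) := by
      rintro g ⟨hgV, -, hgVc⟩
      exact hgVc hgV
    exact ((hx _ hnhd).mono hsub) Set.finite_empty
end

section
/- Let G be a T1 paratopological group that is not feebly compact, precompact, with a countable dense subgroup P. Then there exists a subset L of P such that L is discrete and closed in G and the subgroup generated by L equals P. In particular, L is a closed suitable set for G. -/
open Pointwise

def IsPrecompactGroup (G : Type*) [Group G] [TopologicalSpace G] : Prop :=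
  ∀ U ∈ nhds (1 : G), ∃ F : Finset G, (F : Set G) * U = Set.univ

/-- Every locally finite family of non-empty open sets is finite. -/
def FeeblyCompact (X : Type*) [TopologicalSpace X] : Prop :=
  ∀ 𝒰 : Set (Set X), (∀ U ∈ 𝒰, IsOpen U ∧ U.Nonempty) →
    (∀ x : X, ∃ V ∈ nhds x, {U ∈ 𝒰 | (U ∩ V).Nonempty}.Finite) → 𝒰.Finite

/-!
Take an infinite locally finite sequence of nonempty open sets `U n` with `U 0 = G`, and let
`T k` be the subgroup generated by `P ∩ ⋃_{n ≥ k} U n`. By density, `P ∩ a⁻¹ U n ⊆ T n`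
for `a ∈ U n`, and precompactness then makes `T (k + 1)` of finite index in `T k`, in the sense
that finitely many left translates cover it. Enumerating the countable group `P = T 0`, the
`i`-th element is `f₀ ⋯ f_{i-1} s` with the `f j` in fixed finite transversals and `s ∈ T i`;
generating the `i`-th transversal and the `i`-th remainder by finitely many points of
`⋃_{n ≥ i} U n` yields a generating set of `P` meeting each neighbourhood only finitely often.
-/

open Filter

namespace Subgroup

variable {G : Type*} [Group G]

theorem exists_finite_subset_of_mem_closure {s : Set G} {x : G} (hx : x ∈ closure s) :
    ∃ t ⊆ s, t.Finite ∧ x ∈ closure t := by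
  induction hx using closure_induction with
  | mem x hx =>
    exact ⟨{x}, Set.singleton_subset_iff.2 hx, Set.finite_singleton x, subset_closure rfl⟩
  | one => exact ⟨∅, Set.empty_subset s, Set.finite_empty, one_mem _⟩
  | mul x y _ _ hx hy =>
    obtain ⟨t₁, hts₁, ht₁, hxt₁⟩ := hx
    obtain ⟨t₂, hts₂, ht₂, hyt₂⟩ := hy
    exact ⟨t₁ ∪ t₂, Set.union_subset hts₁ hts₂, ht₁.union ht₂,
      mul_mem (closure_mono Set.subset_union_left hxt₁)
        (closure_mono Set.subset_union_right hyt₂)⟩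
  | inv x _ hx =>
    obtain ⟨t, hts, ht, hxt⟩ := hx
    exact ⟨t, hts, ht, inv_mem hxt⟩

theorem exists_finite_subset_of_subset_closure {s F : Set G} (hF : F.Finite)
    (hFs : F ⊆ closure s) : ∃ t ⊆ s, t.Finite ∧ F ⊆ closure t := by
  choose t hts ht hxt using fun x (hx : x ∈ F) => exists_finite_subset_of_mem_closure (hFs hx)
  refine ⟨⋃ x, ⋃ hx, t x hx, Set.iUnion₂_subset hts, hF.biUnion' ht, fun x hx => ?_⟩
  exact closure_mono (Set.subset_iUnion₂_of_subset x hx subset_rfl) (hxt x hx)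

theorem exists_mem_mul_inv_mem_of_chain {T : ℕ → Subgroup G} {F : ℕ → Set G}
    {K : Subgroup G} (hFK : ∀ j, F j ⊆ K)
    (hF : ∀ j, ∀ t ∈ T j, ∃ f ∈ F j, f⁻¹ * t ∈ T (j + 1)) {t : G} (ht : t ∈ T 0) :
    ∀ i, ∃ s ∈ T i, t * s⁻¹ ∈ K
  | 0 => ⟨t, ht, by simp⟩
  | i + 1 => by
    obtain ⟨s, hs, hts⟩ := exists_mem_mul_inv_mem_of_chain hFK hF ht i
    obtain ⟨f, hfF, hfs⟩ := hF i s hs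
    exact ⟨f⁻¹ * s, hfs, by simpa [mul_assoc] using K.mul_mem hts (hFK i hfF)⟩

theorem exists_finite_subsets_le_closure_iUnion {T : ℕ → Subgroup G} {S : ℕ → Set G}
    (hS : ∀ k, T k ≤ closure (S k)) (hT₀ : (T 0 : Set G).Countable)
    (hF : ∀ j, ∃ F : Set G, F.Finite ∧ F ⊆ T j ∧
      ∀ t ∈ T j, ∃ f ∈ F, f⁻¹ * t ∈ T (j + 1)) :
    ∃ E : ℕ → Set G, (∀ k, (E k).Finite ∧ E k ⊆ S k) ∧
      T 0 ≤ closure (⋃ k, E k) := by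
  obtain ⟨p, hp⟩ := hT₀.exists_eq_range ⟨1, (T 0).one_mem⟩
  choose F hFfin hFT hF using hF
  have hFK : ∀ j, F j ⊆ closure (⋃ j, F j) :=
    fun j => (Set.subset_iUnion F j).trans subset_closure
  choose s hsT hsK using fun i =>
    exists_mem_mul_inv_mem_of_chain hFK hF (hp ▸ Set.mem_range_self i) i
  choose E hES hEfin hE using fun k => exists_finite_subset_of_subset_closure
    ((hFfin k).insert (s k)) ((Set.insert_subset (hsT k) (hFT k)).trans (hS k))
  refine ⟨E, fun k => ⟨hEfin k, hES k⟩, ?_⟩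
  have hE_le : ∀ k, closure (E k) ≤ closure (⋃ k, E k) :=
    fun k => closure_mono (Set.subset_iUnion E k)
  have hF_le : closure (⋃ j, F j) ≤ closure (⋃ k, E k) :=
    (closure_le _).2 <| Set.iUnion_subset fun j =>
      (Set.subset_insert _ _).trans ((hE j).trans (hE_le j))
  intro t ht
  obtain ⟨i, rfl⟩ := (hp ▸ ht : t ∈ Set.range p)
  simpa using mul_mem (hF_le (hsK i)) (hE_le i (hE i (Set.mem_insert _ _)))

end Subgroup

section LocallyFinite

variable {X : Type*} [TopologicalSpace X]

theorem LocallyFinite.update {ι : Type*} [DecidableEq ι] {f : ι → Set X}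
    (hf : LocallyFinite f) (i : ι) (s : Set X) : LocallyFinite (Function.update f i s) := by
  intro x
  obtain ⟨V, hV, hfin⟩ := hf x
  refine ⟨V, hV, (hfin.insert i).subset fun j hj => ?_⟩
  rcases eq_or_ne j i with rfl | hji
  · exact Set.mem_insert j _
  · exact Set.mem_insert_of_mem i (by simpa [Function.update_of_ne hji] using hj)

theorem LocallyFinite.of_subset_iUnion_ge {U E : ℕ → Set X} (hU : LocallyFinite U)
    (hE : ∀ k, E k ⊆ ⋃ n ≥ k, U n) : LocallyFinite E := by
  intro x
  obtain ⟨V, hV, hfin⟩ := hU x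
  obtain ⟨N, hN⟩ := hfin.bddAbove
  refine ⟨V, hV, (Set.finite_Iic N).subset ?_⟩
  rintro k ⟨y, hyE, hyV⟩
  obtain ⟨n, hkn, hyU⟩ := Set.mem_iUnion₂.1 (hE k hyE)
  exact hkn.trans (hN ⟨y, hyU, hyV⟩)

theorem LocallyFinite.isClosed_and_isDiscrete_iUnion [T1Space X] {ι : Type*}
    {E : ι → Set X} (hE : LocallyFinite E) (hfin : ∀ i, (E i).Finite) :
    IsClosed (⋃ i, E i) ∧ IsDiscrete (⋃ i, E i) := by
  refine isClosed_and_discrete_iff.2 fun x => ?_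
  obtain ⟨V, hV, hI⟩ := hE x
  have hLV : ((⋃ i, E i) ∩ V).Finite := (hI.biUnion fun i _ => hfin i).subset <| by
    rintro y ⟨hy, hyV⟩
    obtain ⟨i, hyi⟩ := Set.mem_iUnion.1 hy
    exact Set.mem_biUnion ⟨y, hyi, hyV⟩ hyi
  rw [disjoint_principal_right]
  filter_upwards [mem_nhdsWithin_of_mem_nhds hV, nhdsNE_le_cofinite x hLV.compl_mem_cofinite]
    with y hyV hy hyL using hy ⟨hyL, hyV⟩

theorem exists_locallyFinite_nat_of_not_feeblyCompact (h : ¬ FeeblyCompact X) :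
    ∃ U : ℕ → Set X, (∀ n, IsOpen (U n)) ∧ (∀ n, (U n).Nonempty) ∧
      LocallyFinite U := by
  simp only [FeeblyCompact, not_forall] at h
  obtain ⟨𝒰, h𝒰, h𝒰lf, h𝒰inf⟩ := h
  let e := Set.Infinite.natEmbedding 𝒰 h𝒰inf
  refine ⟨fun n => e n, fun n => (h𝒰 _ (e n).2).1, fun n => (h𝒰 _ (e n).2).2, fun x => ?_⟩
  obtain ⟨V, hV, hfin⟩ := h𝒰lf x
  refine ⟨V, hV, (hfin.preimage (Subtype.val_injective.comp e.injective).injOn).subset ?_⟩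
  exact fun n hn => ⟨(e n).2, hn⟩

end LocallyFinite

section DenseSubgroup

variable {G : Type*} [Group G] [TopologicalSpace G] [ContinuousMul G] {P : Subgroup G}

theorem Dense.mem_subgroup_of_mul_mem (hP : Dense (P : Set G)) {H : Subgroup G} {Ω : Set G}
    (hΩ : IsOpen Ω) (hΩH : (P : Set G) ∩ Ω ⊆ H) {q ω : G} (hq : q ∈ P) (hω : ω ∈ Ω)
    (hωq : ω * q ∈ Ω) : q ∈ H := by
  obtain ⟨x, ⟨hxΩ, hxqΩ⟩, hxP⟩ := hP.inter_open_nonempty _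
    (hΩ.inter (hΩ.preimage (continuous_mul_const q⁻¹))) ⟨ω * q, hωq, by simpa using hω⟩
  have hx : x ∈ H := hΩH ⟨hxP, hxΩ⟩
  have hxq : x * q⁻¹ ∈ H := hΩH ⟨P.mul_mem hxP (P.inv_mem hq), hxqΩ⟩
  simpa using H.mul_mem (H.inv_mem hxq) hx

theorem Dense.inter_preimage_mul_left_subset_closure (hP : Dense (P : Set G)) {U : Set G}
    (hU : IsOpen U) {a : G} (ha : a ∈ U) :
    (P : Set G) ∩ (a * ·) ⁻¹' U ⊆ Subgroup.closure ((P : Set G) ∩ U) := by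
  rintro x ⟨hxP, hax⟩
  obtain ⟨y, ⟨hyU, hyxU⟩, hyP⟩ := hP.inter_open_nonempty _
    (hU.inter (hU.preimage (continuous_mul_const x))) ⟨a, ha, hax⟩
  have hy : y ∈ Subgroup.closure ((P : Set G) ∩ U) := Subgroup.subset_closure ⟨hyP, hyU⟩
  have hyx : y * x ∈ Subgroup.closure ((P : Set G) ∩ U) :=
    Subgroup.subset_closure ⟨P.mul_mem hyP hxP, hyxU⟩
  simpa using Subgroup.mul_mem _ (Subgroup.inv_mem _ hy) hyx

theorem IsPrecompactGroup.exists_finite_cover_closure_inter (hG : IsPrecompactGroup G)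
    (hP : Dense (P : Set G)) {U : Set G} (hU : IsOpen U) (hUne : U.Nonempty)
    {M : Set G} (hMP : M ⊆ P) :
    ∃ R : Set G, R.Finite ∧ R ⊆ M ∧
      ∀ t ∈ M, ∃ r ∈ R, r⁻¹ * t ∈ Subgroup.closure ((P : Set G) ∩ U) := by
  obtain ⟨a, ha⟩ := hUne
  set Ω : Set G := (a * ·) ⁻¹' U
  have hΩ : IsOpen Ω := hU.preimage (continuous_const_mul a)
  obtain ⟨F, hF⟩ := hG Ω (hΩ.mem_nhds (by simpa [Ω] using ha))
  set S : Set G := {f ∈ (F : Set G) | (M ∩ f • Ω).Nonempty}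
  have : Finite S := (F.finite_toSet.subset (Set.sep_subset _ _)).to_subtype
  choose r hrM hrΩ using fun f : S => f.2.2
  refine ⟨Set.range r, Set.finite_range r, Set.range_subset_iff.2 hrM, fun t ht => ?_⟩
  have htFΩ : t ∈ (F : Set G) * Ω := hF ▸ Set.mem_univ t
  obtain ⟨f, hfF, ω, hω, rfl⟩ := Set.mem_mul.1 htFΩ
  have hfS : f ∈ S := ⟨hfF, f * ω, ht, Set.smul_mem_smul_set hω⟩
  obtain ⟨ω', hω', hrf⟩ := Set.mem_smul_set.1 (hrΩ ⟨f, hfS⟩)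
  refine ⟨r ⟨f, hfS⟩, Set.mem_range_self _, ?_⟩
  rw [← hrf, smul_eq_mul, mul_inv_rev, mul_assoc, inv_mul_cancel_left]
  have hq : ω'⁻¹ * ω ∈ P := by
    simpa [← hrf, mul_assoc] using P.mul_mem (P.inv_mem (hMP (hrM ⟨f, hfS⟩))) (hMP ht)
  -- Without continuous inversion `Ω⁻¹ * Ω` need not lie near `1`; density of `P` replaces it.
  exact hP.mem_subgroup_of_mul_mem hΩ (hP.inter_preimage_mul_left_subset_closure hU ha) hq hω'
    (by simpa using hω)

end DenseSubgroup

theorem stmt9 {G : Type*} [Group G] [TopologicalSpace G] [ContinuousMul G] [T1Space G]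
    (hnf : ¬ FeeblyCompact G) (hpre : IsPrecompactGroup G)
    (P : Subgroup G) (hPc : (P : Set G).Countable) (hPd : Dense (P : Set G)) :
    ∃ L : Set G, L ⊆ (P : Set G) ∧ DiscreteTopology L ∧ IsClosed L ∧
      Subgroup.closure L = P ∧ Dense (Subgroup.closure L : Set G) := by
  obtain ⟨U₀, hU₀o, hU₀ne, hU₀lf⟩ := exists_locallyFinite_nat_of_not_feeblyCompact hnf
  -- Adjoining `G` itself as `U 0` makes the first subgroup of the chain all of `P`.
  set U := Function.update U₀ 0 Set.univ
  have hUo : ∀ n, IsOpen (U n) := by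
    simpa [U, Function.forall_update_iff] using fun n _ => hU₀o n
  have hUne : ∀ n, (U n).Nonempty := by
    simpa [U, Function.forall_update_iff] using fun n _ => hU₀ne n
  set S : ℕ → Set G := fun k => (P : Set G) ∩ ⋃ n ≥ k, U n
  have hS₀ : Subgroup.closure (S 0) = P := by
    have : S 0 = P :=
      Set.inter_eq_left.2 fun x _ => Set.mem_iUnion₂.2 ⟨0, le_rfl, by simp [U]⟩
    rw [this, Subgroup.closure_eq]
  have hUS : ∀ k, (P : Set G) ∩ U k ⊆ S k := fun k =>
    Set.inter_subset_inter_right _ (Set.subset_iUnion₂_of_subset k le_rfl subset_rfl)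
  obtain ⟨E, hE, hPE⟩ := Subgroup.exists_finite_subsets_le_closure_iUnion
    (T := fun k => Subgroup.closure (S k)) (fun _ => le_rfl) (hS₀ ▸ hPc) fun j => by
      obtain ⟨F, hF, hFS, hFcov⟩ := hpre.exists_finite_cover_closure_inter hPd (hUo (j + 1))
        (hUne (j + 1)) ((Subgroup.closure_le P).2 Set.inter_subset_left)
      exact ⟨F, hF, hFS, fun t ht => (hFcov t ht).imp fun f ⟨hf, hft⟩ =>
        ⟨hf, Subgroup.closure_mono (hUS _) hft⟩⟩
  have hEP : (⋃ k, E k) ⊆ P := Set.iUnion_subset fun k => (hE k).2.trans Set.inter_subset_left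
  have hElf : LocallyFinite E := (hU₀lf.update 0 Set.univ).of_subset_iUnion_ge fun k =>
    (hE k).2.trans Set.inter_subset_right
  obtain ⟨hcl, hdisc⟩ := hElf.isClosed_and_isDiscrete_iUnion fun k => (hE k).1
  have hL : Subgroup.closure (⋃ k, E k) = P :=
    le_antisymm ((Subgroup.closure_le P).2 hEP) (hS₀ ▸ hPE)
  exact ⟨⋃ k, E k, hEP, isDiscrete_iff_discreteTopology.1 hdisc, hcl, hL, hL ▸ hPd⟩
end

section
/- If an open subgroup H of a T1 paratopological group G has a suitable set, then G has a suitable set; moreover if H has a closed suitable set then G has a closed suitable set. -/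
/-!
Add to `S` one representative of every coset of `H` other than `H`. As `H` is open, each coset
is an open set containing at most one representative, so in a `T1` group the representatives
form a closed discrete set, and it lies in the complement of the clopen set `H`. The closure of
the subgroup generated by the enlarged set is a submonoid, because multiplication is continuous;
it contains `H` and every representative, hence all of `G`.
-/

open Set Filter Topology Pointwise

theorem isClosed_and_isDiscrete_of_forall_exists_finite_inter {X : Type*} [TopologicalSpace X]
    [T1Space X] {A : Set X} (h : ∀ x, ∃ U ∈ 𝓝 x, (A ∩ U).Finite) :
    IsClosed A ∧ IsDiscrete A := by
  refine isClosed_and_discrete_iff.2 fun x => disjoint_principal_right.2 ?_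
  obtain ⟨U, hU, hfin⟩ := h x
  filter_upwards [nhdsWithin_le_nhds hU, nhdsNE_le_cofinite x hfin.compl_mem_cofinite]
    with y hyU hy hyA
  exact hy ⟨hyA, hyU⟩

theorem IsDiscrete.union_of_isClopen {X : Type*} [TopologicalSpace X] {s t U : Set X}
    (hs : IsDiscrete s) (ht : IsDiscrete t) (hU : IsClopen U) (hsU : s ⊆ U) (htU : t ⊆ Uᶜ) :
    IsDiscrete (s ∪ t) := by
  rw [isDiscrete_iff_forall_mem_exists_isOpen] at *
  rintro y (hy | hy)
  · obtain ⟨V, hV, hVs⟩ := hs y hy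
    refine ⟨V ∩ U, hV.inter hU.isOpen, ?_⟩
    rw [← hVs]
    ext z
    constructor
    · rintro ⟨⟨hzV, hzU⟩, hz | hz⟩
      exacts [⟨hzV, hz⟩, absurd hzU (htU hz)]
    · rintro ⟨hzV, hz⟩
      exact ⟨⟨hzV, hsU hz⟩, Or.inl hz⟩
  · obtain ⟨V, hV, hVt⟩ := ht y hy
    refine ⟨V ∩ Uᶜ, hV.inter hU.isClosed.isOpen_compl, ?_⟩
    rw [← hVt]
    ext z
    constructor
    · rintro ⟨⟨hzV, hzU⟩, hz | hz⟩
      exacts [absurd (hsU hz) hzU, ⟨hzV, hz⟩]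
    · rintro ⟨hzV, hz⟩
      exact ⟨⟨hzV, htU hz⟩, Or.inr hz⟩

section

variable {G : Type*} [Group G] {H : Subgroup G}

theorem range_out_inter_leftCoset_subset (x : G) :
    range (Quotient.out : G ⧸ H → G) ∩ x • (H : Set G) ⊆ {(x : G ⧸ H).out} := by
  rintro _ ⟨⟨c, rfl⟩, hc⟩
  rw [mem_singleton_iff, QuotientGroup.eq.2 ((mem_leftCoset_iff x).1 hc), QuotientGroup.out_eq']

theorem Submonoid.eq_top_of_subgroup_le_of_range_out_subset (M : Submonoid G)
    (hH : H.toSubmonoid ≤ M) (hout : range (Quotient.out : G ⧸ H → G) ⊆ M) : M = ⊤ := by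
  refine eq_top_iff.2 fun x _ => ?_
  have hx : ((x : G ⧸ H).out)⁻¹ * x ∈ H := QuotientGroup.eq.1 (QuotientGroup.out_eq' _)
  simpa using M.mul_mem (hout (mem_range_self (x : G ⧸ H))) (hH hx)

end

section

variable {G : Type*} [Group G] [TopologicalSpace G] {H : Subgroup G}

def nontrivialCosetReps (H : Subgroup G) : Set G := range (Quotient.out : G ⧸ H → G) \ H

theorem isClosed_and_isDiscrete_nontrivialCosetReps [SeparatelyContinuousMul G] [T1Space G]
    (hH : IsOpen (H : Set G)) :
    IsClosed (nontrivialCosetReps H) ∧ IsDiscrete (nontrivialCosetReps H) :=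
  isClosed_and_isDiscrete_of_forall_exists_finite_inter fun x =>
    ⟨x • (H : Set G), (hH.leftCoset x).mem_nhds (mem_own_leftCoset H.toSubmonoid x),
      (finite_singleton _).subset
        ((inter_subset_inter_left _ sdiff_subset).trans (range_out_inter_leftCoset_subset x))⟩

theorem subset_closure_subgroupClosure_image_val {S : Set H}
    (hS : Dense (Subgroup.closure S : Set H)) :
    (H : Set G) ⊆ closure (Subgroup.closure (Subtype.val '' S) : Set G) := by
  intro x hx
  have hval := image_closure_subset_closure_image continuous_subtype_val
    (mem_image_of_mem Subtype.val (hS ⟨x, hx⟩))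
  rwa [← H.coe_subtype, ← Subgroup.coe_map, MonoidHom.map_closure] at hval

variable [ContinuousMul G] [T1Space G]

theorem IsSuitable.image_val_union_nontrivialCosetReps (hH : IsOpen (H : Set G)) {S : Set H}
    (hS : IsSuitable S) : IsSuitable (Subtype.val '' S ∪ nontrivialCosetReps H) := by
  obtain ⟨hSdisc, hScl, hSdense⟩ := hS
  obtain ⟨hRcl, hRdisc⟩ := isClosed_and_isDiscrete_nontrivialCosetReps hH
  have hHclopen : IsClopen (H : Set G) := ⟨H.isClosed_of_isOpen hH, hH⟩
  refine ⟨?_, ?_, ?_⟩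
  · rw [← isDiscrete_iff_discreteTopology] at hSdisc ⊢
    exact (hSdisc.image_of_isOpenMap hH.isOpenMap_subtype_val Subtype.val_injective)
      |>.union_of_isClopen hRdisc hHclopen (Subtype.coe_image_subset _ S) fun _ h => h.2
  · have hS1 : Subtype.val '' S ∪ {1} = Subtype.val '' (S ∪ {1}) := by
      rw [image_union, image_singleton]
      rfl
    rw [union_right_comm, hS1]
    exact (hHclopen.isClosed.isClosedMap_subtype_val _ hScl).union hRcl
  · set T := Subtype.val '' S ∪ nontrivialCosetReps H
    have hHT : (H : Set G) ⊆ closure (Subgroup.closure T : Set G) :=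
      (subset_closure_subgroupClosure_image_val hSdense).trans
        (closure_mono (Subgroup.closure_mono subset_union_left))
    have hout : range (Quotient.out : G ⧸ H → G) ⊆ closure (Subgroup.closure T : Set G) := by
      rintro _ ⟨c, rfl⟩
      by_cases hc : c.out ∈ H
      · exact hHT hc
      · exact subset_closure (Subgroup.subset_closure (Or.inr ⟨⟨c, rfl⟩, hc⟩))
    have hM := (Subgroup.closure T).toSubmonoid.topologicalClosure
      |>.eq_top_of_subgroup_le_of_range_out_subset hHT hout
    exact dense_iff_closure_eq.2 (congrArg SetLike.coe hM)

theorem IsClosed.image_val_union_nontrivialCosetReps (hH : IsOpen (H : Set G)) {S : Set H}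
    (hS : IsClosed S) : IsClosed (Subtype.val '' S ∪ nontrivialCosetReps H) :=
  ((H.isClosed_of_isOpen hH).isClosedMap_subtype_val _ hS).union
    (isClosed_and_isDiscrete_nontrivialCosetReps hH).1

end

theorem stmt10 {G : Type*} [Group G] [TopologicalSpace G] [ContinuousMul G] [T1Space G]
    (H : Subgroup G) (hopen : IsOpen (H : Set G)) :
    ((∃ S : Set H, IsSuitable S) → ∃ T : Set G, IsSuitable T) ∧
    ((∃ S : Set H, IsSuitable S ∧ IsClosed S) → ∃ T : Set G, IsSuitable T ∧ IsClosed T) := by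
  constructor
  · rintro ⟨S, hS⟩
    exact ⟨_, hS.image_val_union_nontrivialCosetReps hopen⟩
  · rintro ⟨S, hS, hScl⟩
    exact ⟨_, hS.image_val_union_nontrivialCosetReps hopen,
      hScl.image_val_union_nontrivialCosetReps hopen⟩
end

section
/- Let G be a hereditarily collectionwise Hausdorff paratopological group with a suitable set S and let H be a sequentially dense subgroup of G. Then H has a suitable set of size at most |S| · ℵ₀. -/
/-- A space is collectionwise Hausdorff if every closed discrete subset `D` is strongly
discrete: the points of `D` can be separated by a discrete family of open sets. -/
def CollectionwiseHausdorff (X : Type*) [TopologicalSpace X] : Prop :=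
  ∀ D : Set X, IsClosed D → DiscreteTopology D →
    ∃ U : D → Set X, (∀ x : D, IsOpen (U x) ∧ (x : X) ∈ U x) ∧
      ∀ y : X, ∃ V ∈ nhds y, {x : D | (U x ∩ V).Nonempty}.Subsingleton

def HereditarilyCollectionwiseHausdorff (X : Type*) [TopologicalSpace X] : Prop :=
  ∀ Y : Set X, CollectionwiseHausdorff Y

/-- Every point of `X` is a limit of a sequence of points of `D`. -/
def SeqDense {X : Type*} [TopologicalSpace X] (D : Set X) : Prop :=
  ∀ x : X, ∃ u : ℕ → X, (∀ n, u n ∈ D) ∧ Filter.Tendsto u Filter.atTop (nhds x)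


/-!
If `G` is not T₁, some `1 ⤳ c ≠ 1`; then `a ⤳ a * c` forces `a * c = 1` for every `a ∈ S`, so
`S = {c}`, `⟨S⟩ = {1, c} ⊆ closure {1}`, `G` is indiscrete and `S ∩ H` is suitable for `H`.

If `G` is T₁, it is Hausdorff, and collectionwise Hausdorffness of `G \ {1}` separates the points
of `S \ {1}` by a discrete family of open sets `U s`. For each such `s` take sequences `a → s` and
`b → s⁻¹` in `H` (constant when `s ∈ H`). The terms of `a` and of `a * b * a → s` lying in `U s`
form a closed discrete subset of `H \ {1}`, because their only possible accumulation point `s` is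
not in `H \ {1}`; the union `T` of these sets over `s` is closed discrete in `H \ {1}` because the
family `U` is discrete. As inversion need not be continuous, `s⁻¹` is reached as the limit of
`a⁻¹ (a * b * a) a⁻¹ ∈ ⟨T⟩`, so `⟨T⟩` is dense; and `T` is a union of `|S|` countable sets.
-/

open Set Filter Topology Cardinal

section ClosedDiscrete

variable {X : Type*} [TopologicalSpace X]

/-- Every subset of `P` is closed relative to `Z`; for `P ⊆ Z` this says that `P` is a closed
discrete subset of the subspace `Z`. -/
def IsClosedDiscreteIn (Z P : Set X) : Prop :=
  ∀ A ⊆ P, closure A ∩ Z ⊆ A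

theorem mem_closure_inter_of_mem_nhds {A V : Set X} {g : X} (hg : g ∈ closure A)
    (hV : V ∈ 𝓝 g) : g ∈ closure (A ∩ V) := by
  rw [mem_closure_iff_nhdsWithin_neBot] at hg ⊢
  rwa [← nhdsWithin_restrict' A hV]

namespace IsClosedDiscreteIn

variable {Z P Q : Set X}

theorem mono (h : IsClosedDiscreteIn Z P) (hQP : Q ⊆ P) {Z' : Set X} (hZ : Z' ⊆ Z) :
    IsClosedDiscreteIn Z' Q :=
  fun A hA _ hg => h A (hA.trans hQP) ⟨hg.1, hZ hg.2⟩

theorem union (hP : IsClosedDiscreteIn Z P) (hQ : IsClosedDiscreteIn Z Q) :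
    IsClosedDiscreteIn Z (P ∪ Q) := by
  intro A hA g ⟨hg, hgZ⟩
  rw [← inter_eq_left.2 hA, inter_union_distrib_left, closure_union] at hg
  rcases hg with hg | hg
  · exact (hP _ inter_subset_right ⟨hg, hgZ⟩).1
  · exact (hQ _ inter_subset_right ⟨hg, hgZ⟩).1

theorem of_finite [T1Space X] (hP : P.Finite) : IsClosedDiscreteIn Z P :=
  fun _ hA _ hg => (hP.subset hA).isClosed.closure_subset hg.1

theorem of_tendsto [T2Space X] {u : ℕ → X} {l : X} (hu : Tendsto u atTop (𝓝 l)) :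
    IsClosedDiscreteIn {l}ᶜ (range u) := by
  intro A hA g ⟨hg, hgl⟩
  obtain ⟨W', W, hW', hW, hdisj⟩ := t2_separation_nhds hgl
  have hfin : (A ∩ W').Finite := by
    refine ((mem_cofinite.1 (Nat.cofinite_eq_atTop ▸ hu hW)).image u).subset ?_
    rintro _ ⟨hyA, hyW'⟩
    obtain ⟨n, rfl⟩ := hA hyA
    exact ⟨n, hdisj.notMem_of_mem_left hyW', rfl⟩
  exact (hfin.isClosed.closure_subset (mem_closure_inter_of_mem_nhds hg hW')).1

theorem range_of_tendsto [T2Space X] {u : ℕ → X} {l : X} (hu : Tendsto u atTop (𝓝 l))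
    (hl : l ∈ Z → ∀ n, u n = l) : IsClosedDiscreteIn Z (range u) := by
  by_cases hlZ : l ∈ Z
  · refine of_finite ((finite_singleton l).subset ?_)
    rintro _ ⟨n, rfl⟩
    exact hl hlZ n
  · exact (of_tendsto hu).mono subset_rfl fun g hg hgl => hlZ (hgl ▸ hg)

theorem iUnion {ι : Type*} {P : ι → Set X} (hP : ∀ i, IsClosedDiscreteIn Z (P i))
    (hloc : ∀ y ∈ Z, ∃ V ∈ 𝓝 y, {i | (P i ∩ V).Nonempty}.Subsingleton) :
    IsClosedDiscreteIn Z (⋃ i, P i) := by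
  intro A hA g ⟨hg, hgZ⟩
  obtain ⟨V, hV, hsub⟩ := hloc g hgZ
  have hgV := mem_closure_inter_of_mem_nhds hg hV
  obtain ⟨x, hxA, hxV⟩ := closure_nonempty_iff.1 ⟨g, hgV⟩
  obtain ⟨i, hxi⟩ := mem_iUnion.1 (hA hxA)
  have hAV : A ∩ V ⊆ A ∩ P i := by
    rintro y ⟨hyA, hyV⟩
    obtain ⟨j, hyj⟩ := mem_iUnion.1 (hA hyA)
    obtain rfl : j = i := hsub ⟨y, hyj, hyV⟩ ⟨x, hxi, hxV⟩
    exact ⟨hyA, hyj⟩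
  exact (hP i _ inter_subset_right ⟨closure_mono hAV hgV, hgZ⟩).1

theorem discreteTopology (h : IsClosedDiscreteIn Z P) (hPZ : P ⊆ Z) : DiscreteTopology P := by
  refine discreteTopology_of_noAccPts fun x hx hacc => ?_
  rw [accPt_principal_iff_nhdsWithin, ← mem_closure_iff_nhdsWithin_neBot] at hacc
  exact (h _ sdiff_subset ⟨hacc, hPZ hx⟩).2 rfl

end IsClosedDiscreteIn

end ClosedDiscrete

section CollectionwiseHausdorff

variable {X : Type*} [TopologicalSpace X] [T1Space X]

theorem CollectionwiseHausdorff.t2Space (h : CollectionwiseHausdorff X) : T2Space X := by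
  refine t2Space_iff_disjoint_nhds.2 fun x y hxy => ?_
  obtain ⟨U, hU, hloc⟩ := h {x, y} (toFinite _).isClosed inferInstance
  obtain ⟨V, hV, hsub⟩ := hloc y
  let x' : ({x, y} : Set X) := ⟨x, by simp⟩
  let y' : ({x, y} : Set X) := ⟨y, by simp⟩
  refine Filter.disjoint_iff.2 ⟨U x', (hU x').1.mem_nhds (hU x').2, U y' ∩ V,
    inter_mem ((hU y').1.mem_nhds (hU y').2) hV, disjoint_left.2 fun z hzx hzy => hxy ?_⟩
  exact congrArg Subtype.val (hsub ⟨z, hzx, hzy.2⟩ ⟨z, hzy⟩)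

theorem HereditarilyCollectionwiseHausdorff.t2Space (h : HereditarilyCollectionwiseHausdorff X) :
    T2Space X :=
  haveI := (h univ).t2Space
  (Homeomorph.Set.univ X).t2Space

theorem HereditarilyCollectionwiseHausdorff.exists_open_discrete_family
    (h : HereditarilyCollectionwiseHausdorff X) (p : X) {S : Set X} (hS : DiscreteTopology S)
    (hSp : IsClosed (S ∪ {p})) :
    ∃ U : ↥(S \ {p}) → Set X, (∀ s, IsOpen (U s) ∧ ↑s ∈ U s ∧ p ∉ U s) ∧
      ∀ y ≠ p, ∃ V ∈ 𝓝 y, {s | (U s ∩ V).Nonempty}.Subsingleton := by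
  have hY : IsOpen ({p}ᶜ : Set X) := isOpen_compl_singleton
  have hD : IsClosed ((↑) ⁻¹' S : Set ({p}ᶜ : Set X)) := by
    convert hSp.preimage continuous_subtype_val using 1
    ext y
    simp [show (y : X) ≠ p from y.2]
  obtain ⟨U, hU, hloc⟩ := h {p}ᶜ _ hD
    (DiscreteTopology.preimage_of_continuous_injective S continuous_subtype_val
      Subtype.val_injective)
  let ι : ↥(S \ {p}) → ((↑) ⁻¹' S : Set ({p}ᶜ : Set X)) := fun s => ⟨⟨s, s.2.2⟩, s.2.1⟩
  refine ⟨fun s => (↑) '' U (ι s), fun s => ⟨hY.isOpenMap_subtype_val _ (hU _).1,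
    ⟨_, (hU _).2, rfl⟩, fun ⟨z, _, hz⟩ => z.2 (mem_singleton_iff.2 hz)⟩, fun y hy => ?_⟩
  obtain ⟨V, hV, hsub⟩ := hloc ⟨y, hy⟩
  refine ⟨(↑) '' V, hY.isOpenMap_subtype_val.image_mem_nhds hV, fun s hs t ht => ?_⟩
  rw [mem_ofPred_eq, ← image_inter Subtype.val_injective, image_nonempty] at hs ht
  exact Subtype.ext (congrArg (fun d => (d.1 : X)) (hsub hs ht))

end CollectionwiseHausdorff

theorem SeqDense.exists_tendsto {X : Type*} [TopologicalSpace X] {D : Set X} (hD : SeqDense D)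
    (x : X) : ∃ u : ℕ → X, (∀ n, u n ∈ D) ∧ Tendsto u atTop (𝓝 x) ∧ (x ∈ D → ∀ n, u n = x) := by
  by_cases hx : x ∈ D
  · exact ⟨fun _ => x, fun _ => hx, tendsto_const_nhds, fun _ _ => rfl⟩
  · obtain ⟨u, huD, hu⟩ := hD x
    exact ⟨u, huD, hu, fun h => absurd h hx⟩

section ParatopologicalGroup

variable {G : Type*} [Group G] [TopologicalSpace G]

theorem mem_closure_and_inv_mem_closure_of_tendsto {K : Subgroup G} {s : G} {a b : ℕ → G}
    (ha : Tendsto a atTop (𝓝 s)) (hb : Tendsto b atTop (𝓝 s⁻¹))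
    (hK : ∀ᶠ n in atTop, a n ∈ K ∧ a n * b n * a n ∈ K) :
    s ∈ closure (K : Set G) ∧ s⁻¹ ∈ closure (K : Set G) := by
  refine ⟨mem_closure_of_tendsto ha (hK.mono fun n hn => hn.1),
    mem_closure_of_tendsto hb (hK.mono fun n ⟨han, habn⟩ => ?_)⟩
  have hbn : b n = (a n)⁻¹ * (a n * b n * a n) * (a n)⁻¹ := by group
  rw [SetLike.mem_coe, hbn]
  exact mul_mem (mul_mem (inv_mem han) habn) (inv_mem han)

theorem IsSuitable.eq_one_of_specializes {S : Set G} (hS : IsSuitable S) {a b : G} (ha : a ∈ S)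
    (hab : a ⤳ b) (hne : a ≠ b) : b = 1 := by
  obtain ⟨hdisc, hcl, -⟩ := hS
  rcases hab.mem_closed hcl (Or.inl ha) with hb | hb
  · exact absurd (congrArg Subtype.val
      (IsInducing.subtypeVal.specializes_iff.1 hab : (⟨a, ha⟩ : S) ⤳ ⟨b, hb⟩).eq) hne
  · exact hb

theorem exists_isSuitable_of_subset {H : Subgroup G} {T : Set G} (hTH : T ⊆ H)
    (hdisc : DiscreteTopology T) (hcl : closure (T ∪ {1}) ∩ H ⊆ T ∪ {1})
    (hdense : Dense (Subgroup.closure T : Set G)) {κ : Cardinal} (hcard : #T ≤ κ) :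
    ∃ T' : Set H, IsSuitable T' ∧ #T' ≤ κ := by
  refine ⟨(↑) ⁻¹' T, ⟨DiscreteTopology.preimage_of_continuous_injective T continuous_subtype_val
    Subtype.val_injective, ?_, ?_⟩, (mk_preimage_of_injective _ _ Subtype.val_injective).trans hcard⟩
  · have he : (↑) ⁻¹' T ∪ {1} = ((↑) ⁻¹' (T ∪ {1}) : Set H) := by
      ext h
      simp
    rw [he]
    exact isClosed_of_closure_subset fun h hh =>
      hcl ⟨continuous_subtype_val.closure_preimage_subset _ hh, h.2⟩
  · have himage : ((↑) '' (Subgroup.closure ((↑) ⁻¹' T : Set H) : Set H)) =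
        (Subgroup.closure T : Set G) := by
      rw [← H.coe_subtype, ← Subgroup.coe_map, MonoidHom.map_closure, H.coe_subtype,
        image_preimage_eq_of_subset (by simpa using hTH)]
    exact IsInducing.subtypeVal.dense_iff.2 fun h => himage ▸ hdense h

variable [ContinuousMul G]

theorem dense_of_forall_mem_closure {S : Set G} {K : Subgroup G}
    (hS : Dense (Subgroup.closure S : Set G))
    (hK : ∀ s ∈ S, s ∈ closure (K : Set G) ∧ s⁻¹ ∈ closure (K : Set G)) :
    Dense (K : Set G) := by
  have hle : (Subgroup.closure S).toSubmonoid ≤ K.toSubmonoid.topologicalClosure := by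
    rw [Subgroup.closure_toSubmonoid, Submonoid.closure_le]
    rintro s (hs | hs)
    · exact (hK s hs).1
    · exact inv_inv s ▸ (hK _ hs).2
  exact dense_closure.1 (hS.mono hle)

theorem IsSuitable.dense_bot_of_not_t1Space {S : Set G} (hS : IsSuitable S) (hG : ¬T1Space G) :
    Dense ((⊥ : Subgroup G) : Set G) := by
  obtain ⟨x, y, hxy, hne⟩ : ∃ x y : G, x ⤳ y ∧ x ≠ y := by
    simpa [t1Space_iff_specializes_imp_eq] using hG
  set c := x⁻¹ * y
  have hc : c ≠ 1 := by simpa [c, inv_mul_eq_one] using hne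
  have h1c : (1 : G) ⤳ c := by simpa [c] using hxy.map (continuous_const_mul x⁻¹)
  have hmul : ∀ a ∈ S, a * c = 1 := fun a ha =>
    hS.eq_one_of_specializes ha (by simpa using h1c.map (continuous_const_mul a)) (by simpa using hc)
  have hcS : c ∈ S := (h1c.mem_closed hS.2.1 (Or.inr rfl)).resolve_right hc
  have hSc : ∀ s ∈ S, s = c := fun s hs => mul_right_cancel ((hmul s hs).trans (hmul c hcS).symm)
  have hc_mem : c ∈ closure ((⊥ : Subgroup G) : Set G) := by
    simpa [specializes_iff_mem_closure] using h1c
  refine dense_of_forall_mem_closure hS.2.2 fun s hs => ?_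
  rw [hSc s hs, inv_eq_of_mul_eq_one_right (hmul c hcS)]
  exact ⟨hc_mem, hc_mem⟩

theorem IsSuitable.exists_isSuitable_of_not_t1Space {S : Set G} (hS : IsSuitable S)
    (hG : ¬T1Space G) (H : Subgroup G) :
    ∃ T : Set H, IsSuitable T ∧ #T ≤ #S * ℵ₀ := by
  refine exists_isSuitable_of_subset (T := S ∩ H) inter_subset_right
    (DiscreteTopology.of_subset hS.1 inter_subset_left) ?_
    ((hS.dense_bot_of_not_t1Space hG).mono (SetLike.coe_subset_coe.2 bot_le))
    ((mk_le_mk_of_subset inter_subset_left).trans (le_mul_of_one_le_right' one_le_aleph0))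
  rintro g ⟨hg, hgH⟩
  rcases hS.2.1.closure_subset_iff.2 (union_subset_union_left _ inter_subset_left) hg with hg | hg
  exacts [Or.inl ⟨hg, hgH⟩, Or.inr hg]

theorem IsSuitable.exists_isSuitable_of_t2Space [T2Space G]
    (hG : HereditarilyCollectionwiseHausdorff G) {S : Set G} (hS : IsSuitable S)
    {H : Subgroup G} (hH : SeqDense (H : Set G)) :
    ∃ T : Set H, IsSuitable T ∧ #T ≤ #S * ℵ₀ := by
  obtain ⟨hdisc, hcl, hdense⟩ := hS
  obtain ⟨U, hU, hloc⟩ := hG.exists_open_discrete_family 1 hdisc hcl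
  choose a haH ha haconst using hH.exists_tendsto
  set ρ : G → ℕ → G := fun s n => a s n * a s⁻¹ n * a s n
  have hρH : ∀ s n, ρ s n ∈ H := fun s n => mul_mem (mul_mem (haH _ _) (haH _ _)) (haH _ _)
  have hρ : ∀ s, Tendsto (ρ s) atTop (𝓝 s) := fun s => by
    simpa using ((ha s).mul (ha s⁻¹)).mul (ha s)
  set P : ↥(S \ {1}) → Set G := fun s => (range (a s) ∪ range (ρ s)) ∩ U s
  set T := ⋃ s, P s
  set Z : Set G := (H : Set G) \ {1}
  have hTZ : T ⊆ Z := by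
    refine iUnion_subset fun s g ⟨hg, hgU⟩ => ⟨?_, fun h => (hU s).2.2 (h ▸ hgU)⟩
    rcases hg with ⟨n, rfl⟩ | ⟨n, rfl⟩
    exacts [haH _ n, hρH _ n]
  have hP : ∀ s, IsClosedDiscreteIn Z (P s) := fun s =>
    ((IsClosedDiscreteIn.range_of_tendsto (ha s) fun hs => haconst s hs.1).union
      (IsClosedDiscreteIn.range_of_tendsto (hρ s) fun hs n => by
        simp [ρ, haconst s hs.1 n, haconst _ (inv_mem hs.1) n])).mono inter_subset_left subset_rfl
  have hT : IsClosedDiscreteIn Z T := IsClosedDiscreteIn.iUnion hP fun y hy =>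
    (hloc y hy.2).imp fun V ⟨hV, hsub⟩ => ⟨hV, hsub.anti fun s ⟨x, hx⟩ => ⟨x, hx.1.2, hx.2⟩⟩
  refine exists_isSuitable_of_subset (fun g hg => (hTZ hg).1) (hT.discreteTopology hTZ) ?_ ?_ ?_
  · rintro g ⟨hg, hgH⟩
    rw [closure_union, closure_singleton] at hg
    by_cases hg1 : g = 1
    · exact Or.inr hg1
    · exact Or.inl (hT T subset_rfl ⟨hg.resolve_right hg1, hgH, hg1⟩)
  · refine dense_of_forall_mem_closure hdense fun s hs => ?_
    by_cases hs1 : s = 1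
    · subst hs1
      simpa using subset_closure (one_mem (Subgroup.closure T))
    set s' : ↥(S \ {1}) := ⟨s, hs, hs1⟩
    refine mem_closure_and_inv_mem_closure_of_tendsto (ha s) (ha s⁻¹) ?_
    filter_upwards [ha s ((hU s').1.mem_nhds (hU s').2.1),
      hρ s ((hU s').1.mem_nhds (hU s').2.1)] with n han hρn
    exact ⟨Subgroup.subset_closure (mem_iUnion.2 ⟨s', Or.inl ⟨n, rfl⟩, han⟩),
      Subgroup.subset_closure (mem_iUnion.2 ⟨s', Or.inr ⟨n, rfl⟩, hρn⟩)⟩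
  · have hPcount : ∀ s, #(P s) ≤ ℵ₀ := fun s => le_aleph0_iff_set_countable.2
      (((countable_range _).union (countable_range _)).mono inter_subset_left)
    calc #T ≤ #↥(S \ {1}) * ⨆ s, #(P s) := mk_iUnion_le P
      _ ≤ #S * ℵ₀ := mul_le_mul' (mk_le_mk_of_subset sdiff_subset) (ciSup_le' hPcount)

end ParatopologicalGroup

theorem stmt12 {G : Type*} [Group G] [TopologicalSpace G] [ContinuousMul G]
    (hG : HereditarilyCollectionwiseHausdorff G)
    (S : Set G) (hS : IsSuitable S)
    (H : Subgroup G) (hH : SeqDense (H : Set G)) :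
    ∃ T : Set H, IsSuitable T ∧ Cardinal.mk T ≤ Cardinal.mk S * Cardinal.aleph0 := by
  by_cases hT1 : T1Space G
  · have := hG.t2Space
    exact hS.exists_isSuitable_of_t2Space hG hH
  · exact hS.exists_isSuitable_of_not_t1Space hT1 H
end

section
/- Let G be a metrizable paratopological group with a suitable set S and let H be a dense subgroup of G. Then H has a suitable set of size at most |S| · ℵ₀. -/
open Set Filter Topology Metric

section Topology

variable {X : Type*} [TopologicalSpace X]

lemma Set.Finite.derivedSet_eq_empty [T1Space X] {A : Set X} (hA : A.Finite) :
    derivedSet A = ∅ :=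
  eq_empty_of_forall_notMem fun _ hx => Set.Infinite.of_accPt hx hA

lemma DiscreteTopology.not_accPt_union_singleton [T1Space X] {S : Set X} (hS : DiscreteTopology S)
    {s : X} (hs : s ∈ S) (p : X) : ¬AccPt s (𝓟 (S ∪ {p})) := by
  rw [← mem_derivedSet, derivedSet_union, (finite_singleton p).derivedSet_eq_empty, union_empty]
  exact fun h => h.ne (discreteTopology_subtype_iff.mp hS s hs)

lemma derivedSet_range_subset_of_tendsto [T2Space X] {ι : Type*} {a : ι → X} {x : X}
    (ha : Tendsto a cofinite (𝓝 x)) : derivedSet (range a) ⊆ {x} := by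
  intro z hz
  by_contra hzx
  obtain ⟨U, V, hU, hV, hzU, hxV, hUV⟩ := t2_separation hzx
  have hfin : (U ∩ range a).Finite := by
    refine ((ha (hV.mem_nhds hxV)).image a).subset ?_
    rintro _ ⟨hn, n, rfl⟩
    exact ⟨n, fun hnV => hUV.ne_of_mem hn hnV rfl, rfl⟩
  exact Set.Infinite.of_accPt (hz.nhds_inter (hU.mem_nhds hzU)) hfin

lemma exists_mem_derivedSet_of_mem_derivedSet_iUnion {ι : Type*} {f : ι → Set X} {x : X}
    (hx : x ∈ derivedSet (⋃ i, f i)) {t : Set X} (ht : t ∈ 𝓝 x)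
    (hsub : {i | (f i ∩ t).Nonempty}.Subsingleton) : ∃ i, x ∈ derivedSet (f i) := by
  rw [mem_derivedSet, accPt_iff_nhds] at hx
  obtain ⟨y, ⟨hyt, hy⟩, -⟩ := hx t ht
  obtain ⟨i, hyi⟩ := mem_iUnion.mp hy
  refine ⟨i, accPt_iff_nhds.mpr fun U hU => ?_⟩
  obtain ⟨w, ⟨⟨hwU, hwt⟩, hw⟩, hwx⟩ := hx (U ∩ t) (inter_mem hU ht)
  obtain ⟨j, hwj⟩ := mem_iUnion.mp hw
  obtain rfl : j = i := hsub ⟨w, hwj, hwt⟩ ⟨y, hyi, hyt⟩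
  exact ⟨w, ⟨hwU, hwj⟩, hwx⟩

lemma Dense.exists_seq_tendsto [FrechetUrysohnSpace X] {D : Set X} (hD : Dense D) {U : Set X}
    (hU : IsOpen U) {x : X} (hx : x ∈ U) :
    ∃ a : ℕ → X, (∀ n, a n ∈ D ∩ U) ∧ Tendsto a atTop (𝓝 x) := by
  obtain ⟨a, haU, ha⟩ := mem_closure_iff_seq_limit.mp (hD.open_subset_closure_inter hU hx)
  exact ⟨a, fun n => (haU n).symm, ha⟩

lemma exists_pos_le_dist_of_not_accPt {X : Type*} [PseudoMetricSpace X] {A : Set X} {x : X}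
    (h : ¬AccPt x (𝓟 A)) : ∃ r > 0, ∀ y ∈ A, y ≠ x → r ≤ dist x y := by
  rw [accPt_iff_nhds] at h
  push Not at h
  obtain ⟨U, hU, hUA⟩ := h
  obtain ⟨r, hr, hball⟩ := Metric.mem_nhds_iff.mp hU
  refine ⟨r, hr, fun y hyA hyx => not_lt.mp fun hlt => hyx (hUA y ⟨hball ?_, hyA⟩)⟩
  rwa [mem_ball, dist_comm]

end Topology

universe u

lemma Cardinal.mk_iUnion_le_mul_aleph0 {α ι : Type u} {f : ι → Set α}
    (hf : ∀ i, (f i).Countable) : Cardinal.mk (⋃ i, f i) ≤ Cardinal.mk ι * Cardinal.aleph0 := by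
  grw [Cardinal.mk_iUnion_le f, ciSup_le' fun i => (hf i).le_aleph0]

section SeparatedFamily

variable {X : Type*} [MetricSpace X] {S : Set X} {p : X} {r : S → ℝ} {C : S → Set X}

lemma two_mul_add_le_dist (hr : ∀ s : S, ∀ y ∈ S ∪ {p}, y ≠ s → r s ≤ dist (s : X) y)
    {s t : S} (hst : s ≠ t) : 2 * (r s / 4 + r t / 4) ≤ dist (s : X) t := by
  have hs := hr s t (Or.inl t.2) (Subtype.coe_ne_coe.mpr hst.symm)
  have ht := hr t s (Or.inl s.2) (Subtype.coe_ne_coe.mpr hst)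
  rw [dist_comm] at ht
  linarith

variable (hr : ∀ s : S, ∀ y ∈ S ∪ {p}, y ≠ s → r s ≤ dist (s : X) y)
  (hC : ∀ s, C s ⊆ closedBall (s : X) (r s / 4))
include hr hC

lemma subsingleton_inter_ball_center (s : S) :
    {t | (C t ∩ ball (s : X) (r s / 4)).Nonempty}.Subsingleton := by
  refine subsingleton_of_forall_eq s ?_
  rintro t ⟨w, hwC, hws⟩
  by_contra hts
  have hwt := hC t hwC
  rw [mem_closedBall] at hwt
  rw [mem_ball] at hws
  linarith [two_mul_add_le_dist hr hts, dist_triangle_left (t : X) s w,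
    dist_nonneg (x := w) (y := s), dist_nonneg (x := w) (y := t)]

lemma subsingleton_inter_ball_of_le_dist {x : X} {δ : ℝ} (hx : ∀ s : S, δ ≤ dist x s) :
    {s | (C s ∩ ball x (δ / 2)).Nonempty}.Subsingleton := by
  rintro s ⟨w, hws, hwx⟩ t ⟨w', hwt, hw'x⟩
  by_contra hst
  have hws := hC s hws
  have hwt := hC t hwt
  rw [mem_closedBall] at hws hwt
  rw [mem_ball] at hwx hw'x
  linarith [two_mul_add_le_dist hr hst, hx s, hx t, dist_triangle_left x s w,
    dist_triangle_left x t w', dist_triangle4 (s : X) w w' t, dist_triangle_right w w' x,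
    dist_comm (s : X) w]

lemma exists_nhds_subsingleton (hpos : ∀ s, 0 < r s) (hS : IsClosed (S ∪ {p})) {x : X}
    (hx : x ≠ p ∨ x ∈ ⋃ s, C s) : ∃ t ∈ 𝓝 x, {s | (C s ∩ t).Nonempty}.Subsingleton := by
  by_cases hxS : x ∈ S
  · exact ⟨_, ball_mem_nhds x (div_pos (hpos ⟨x, hxS⟩) four_pos),
      subsingleton_inter_ball_center hr hC ⟨x, hxS⟩⟩
  have hxp : x ≠ p := by
    rintro rfl
    obtain ⟨s, hs⟩ := mem_iUnion.mp (hx.resolve_left (not_not.mpr rfl))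
    have hsx := hC s hs
    rw [mem_closedBall, dist_comm] at hsx
    linarith [hr s x (Or.inr rfl) (fun h => hxS (h ▸ s.2)), hpos s]
  have hxcl : x ∉ closure S := fun h => by
    rcases hS.closure_subset_iff.mpr subset_union_left h with h | h
    exacts [hxS h, hxp h]
  rw [Metric.mem_closure_iff] at hxcl
  push Not at hxcl
  obtain ⟨δ, hδ, hδS⟩ := hxcl
  exact ⟨_, ball_mem_nhds x (half_pos hδ),
    subsingleton_inter_ball_of_le_dist hr hC fun s => hδS s s.2⟩

end SeparatedFamily

section Group

variable {G : Type*} [Group G] [TopologicalSpace G]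

lemma Subgroup.coe_closure_subset_closure [ContinuousMul G] {S : Set G} {K : Subgroup G}
    (hS : ∀ s ∈ S, s ∈ _root_.closure (K : Set G) ∧ s⁻¹ ∈ _root_.closure (K : Set G)) :
    (Subgroup.closure S : Set G) ⊆ _root_.closure K := by
  intro g hg
  rw [SetLike.mem_coe, ← Subgroup.mem_toSubmonoid, Subgroup.closure_toSubmonoid] at hg
  refine (Submonoid.closure_le (S := K.toSubmonoid.topologicalClosure).mpr ?_) hg
  rintro s (hs | hs)
  · exact (hS s hs).1
  · exact (inv_inv s ▸ (hS s⁻¹ hs).2 : s ∈ _root_.closure (K : Set G))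

lemma isSuitable_preimage_subtype_val [T1Space G] {H : Subgroup G} {C : Set G} (hCH : C ⊆ H)
    (hder : derivedSet C ∩ H ⊆ {1} \ C) (hdense : Dense (Subgroup.closure C : Set G)) :
    IsSuitable (Subtype.val ⁻¹' C : Set H) := by
  have hdisc : IsDiscrete C := isDiscrete_iff_discreteTopology.mpr <|
    discreteTopology_of_noAccPts fun x hxC hx => (hder ⟨hx, hCH hxC⟩).2 hxC
  refine ⟨isDiscrete_iff_discreteTopology.mp <|
      hdisc.preimage continuous_subtype_val.continuousOn Subtype.val_injective, ?_, ?_⟩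
  · convert (isClosed_closure (s := C ∪ {1})).preimage continuous_subtype_val using 1
    ext h
    have hd : (h : G) ∈ derivedSet C → h = 1 := fun hd => Subtype.ext (hder ⟨hd, h.2⟩).1
    simp only [mem_union, mem_preimage, mem_singleton_iff, closure_eq_self_union_derivedSet,
      derivedSet_union, (finite_singleton (1 : G)).derivedSet_eq_empty, union_empty,
      OneMemClass.coe_eq_one]
    tauto
  · rw [Subtype.dense_iff, ← Subgroup.coe_subtype, ← Subgroup.coe_map, MonoidHom.map_closure,
      Subgroup.coe_subtype, image_preimage_eq_of_subset (by rwa [Subtype.range_coe])]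
    exact fun g _ => hdense g

variable [ContinuousMul G] [FrechetUrysohnSpace G] [T2Space G] {H : Subgroup G}

lemma exists_countable_approx_of_notMem (hH : Dense (H : Set G)) {s : G} (hs : s ∉ H) {W : Set G}
    (hW : W ∈ 𝓝 s) :
    ∃ C ⊆ (H : Set G) ∩ W, C.Countable ∧ derivedSet C ∩ H = ∅ ∧
      s ∈ closure (Subgroup.closure C : Set G) ∧ s⁻¹ ∈ closure (Subgroup.closure C : Set G) := by
  obtain ⟨U, hUW, hU, hsU⟩ := mem_nhds_iff.mp hW
  have hcont : Tendsto (fun p : G × G => s⁻¹ * p.1 * p.2) (𝓝 (s, s)) (𝓝 s) :=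
    (by fun_prop : Continuous fun p : G × G => s⁻¹ * p.1 * p.2).tendsto' _ _ (by group)
  obtain ⟨U₁, hU₁, U₂, hU₂, hU₁₂⟩ := mem_nhds_prod_iff.mp (hcont (hU.mem_nhds hsU))
  obtain ⟨u, huH, huU, huU₁⟩ := hH.inter_nhds_nonempty (inter_mem (hU.mem_nhds hsU) hU₁)
  obtain ⟨v, hvH, hvU, hvU₂⟩ := hH.inter_nhds_nonempty (inter_mem (hU.mem_nhds hsU) hU₂)
  set x := s⁻¹ * u * v with hx
  have hxU : x ∈ U := hU₁₂ (mk_mem_prod huU₁ hvU₂)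
  have hxH : x ∉ H := fun hxH => hs <| by
    rw [show s = u * v * x⁻¹ by rw [hx]; group]
    exact H.mul_mem (H.mul_mem huH hvH) (H.inv_mem hxH)
  obtain ⟨a, haHU, ha⟩ := hH.exists_seq_tendsto hU hxU
  obtain ⟨b, hbHU, hb⟩ := hH.exists_seq_tendsto hU hsU
  set C := {u, v} ∪ range a ∪ range b
  have hmem : ∀ {g}, g ∈ C → g ∈ Subgroup.closure C := fun hg => Subgroup.subset_closure hg
  refine ⟨C, ?_, ((toFinite _).countable.union (countable_range a)).union (countable_range b),
    ?_, ?_, ?_⟩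
  · refine Subset.trans ?_ (inter_subset_inter_right _ hUW)
    exact union_subset (union_subset
      (insert_subset ⟨huH, huU⟩ (singleton_subset_iff.mpr ⟨hvH, hvU⟩))
      (range_subset_iff.mpr haHU)) (range_subset_iff.mpr hbHU)
  · have hder : derivedSet C ⊆ {x} ∪ {s} := by
      rw [derivedSet_union, derivedSet_union, (toFinite _).derivedSet_eq_empty, empty_union]
      rw [← Nat.cofinite_eq_atTop] at ha hb
      exact union_subset_union (derivedSet_range_subset_of_tendsto ha)
        (derivedSet_range_subset_of_tendsto hb)
    refine eq_empty_of_forall_notMem fun g ⟨hgC, hgH⟩ => ?_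
    rcases hder hgC with rfl | rfl
    exacts [hxH hgH, hs hgH]
  · exact mem_closure_of_tendsto hb (Eventually.of_forall fun n => hmem (Or.inr ⟨n, rfl⟩))
  · rw [show s⁻¹ = x * (v⁻¹ * u⁻¹) by rw [hx]; group]
    refine mem_closure_of_tendsto (ha.mul_const _) (Eventually.of_forall fun n => ?_)
    have hu : u ∈ Subgroup.closure C := hmem (Or.inl (Or.inl (Or.inl rfl)))
    have hv : v ∈ Subgroup.closure C := hmem (Or.inl (Or.inl (Or.inr rfl)))
    exact mul_mem (hmem (Or.inl (Or.inr ⟨n, rfl⟩))) (mul_mem (inv_mem hv) (inv_mem hu))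

lemma exists_countable_approx (hH : Dense (H : Set G)) (s : G) {W : Set G} (hW : W ∈ 𝓝 s) :
    ∃ C ⊆ (H : Set G) ∩ W, C.Countable ∧ derivedSet C ∩ H = ∅ ∧
      s ∈ closure (Subgroup.closure C : Set G) ∧ s⁻¹ ∈ closure (Subgroup.closure C : Set G) := by
  by_cases hs : s ∈ H
  · refine ⟨{s}, singleton_subset_iff.mpr ⟨hs, mem_of_mem_nhds hW⟩, countable_singleton s,
      by rw [(finite_singleton s).derivedSet_eq_empty, empty_inter],
      subset_closure (Subgroup.subset_closure rfl),
      subset_closure (inv_mem (Subgroup.subset_closure rfl))⟩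
  · exact exists_countable_approx_of_notMem hH hs hW

end Group

theorem stmt13 {G : Type*} [Group G] [TopologicalSpace G] [ContinuousMul G]
    [TopologicalSpace.MetrizableSpace G]
    (S : Set G) (hS : IsSuitable S)
    (H : Subgroup G) (hH : Dense (H : Set G)) :
    ∃ T : Set H, IsSuitable T ∧ Cardinal.mk T ≤ Cardinal.mk S * Cardinal.aleph0 := by
  let := TopologicalSpace.metrizableSpaceMetric G
  obtain ⟨hSdisc, hSclosed, hSdense⟩ := hS
  choose r hr hrS using fun s : S =>
    exists_pos_le_dist_of_not_accPt (hSdisc.not_accPt_union_singleton s.2 1)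
  choose C hCHW hCcount hCder hCs hCinv using fun s : S =>
    exists_countable_approx hH (s : G) (closedBall_mem_nhds (s : G) (div_pos (hr s) four_pos))
  have hCH : ∀ s, C s ⊆ H := fun s => (hCHW s).trans inter_subset_left
  have hCball : ∀ s, C s ⊆ closedBall (s : G) (r s / 4) :=
    fun s => (hCHW s).trans inter_subset_right
  refine ⟨Subtype.val ⁻¹' ⋃ s, C s, isSuitable_preimage_subtype_val (iUnion_subset hCH) ?_ ?_, ?_⟩
  · rintro x ⟨hxT, hxH⟩
    by_contra hx
    rw [Set.mem_sdiff, mem_singleton_iff, not_and_or, not_not] at hx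
    obtain ⟨t, ht, hsub⟩ := exists_nhds_subsingleton hrS hCball hr hSclosed hx
    obtain ⟨s, hs⟩ := exists_mem_derivedSet_of_mem_derivedSet_iUnion hxT ht hsub
    exact (hCder s ▸ ⟨hs, hxH⟩ : x ∈ (∅ : Set G))
  · refine dense_closure.mp (hSdense.mono (Subgroup.coe_closure_subset_closure fun s hs => ?_))
    have hmono : closure (Subgroup.closure (C ⟨s, hs⟩) : Set G) ⊆
        closure (Subgroup.closure (⋃ s, C s) : Set G) :=
      closure_mono (Subgroup.closure_mono (subset_iUnion C ⟨s, hs⟩))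
    exact ⟨hmono (hCs ⟨s, hs⟩), hmono (hCinv ⟨s, hs⟩)⟩
  · exact (Cardinal.mk_preimage_of_injective _ _ Subtype.val_injective).trans
      (Cardinal.mk_iUnion_le_mul_aleph0 hCcount)
end

section
/- If a T1 paratopological group G has a suitable set, then d(G) ≤ ψ(G) · e(G), where d(G) is the density, ψ(G) the pseudocharacter, and e(G) the extent of G. -/
open Cardinal

/-- The density of a space: the smallest infinite cardinality of a dense subset. -/
noncomputable def densityCard (X : Type*) [TopologicalSpace X] : Cardinal :=
  max ℵ₀ (sInf {c : Cardinal | ∃ s : Set X, Dense s ∧ #s = c})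

/-- The pseudocharacter of a space: the smallest infinite cardinal `κ` such that every
point is the intersection of at most `κ` open sets. -/
noncomputable def pseudoCharacter (X : Type*) [TopologicalSpace X] : Cardinal :=
  sInf {κ : Cardinal | ℵ₀ ≤ κ ∧ ∀ x : X, ∃ 𝒰 : Set (Set X),
    #𝒰 ≤ κ ∧ (∀ U ∈ 𝒰, IsOpen U) ∧ ⋂₀ 𝒰 = {x}}

/-- The extent of a space: the supremum of cardinalities of closed discrete subspaces. -/
noncomputable def extentCard (X : Type*) [TopologicalSpace X] : Cardinal :=
  max ℵ₀ (sSup {c : Cardinal | ∃ s : Set X, IsClosed s ∧ DiscreteTopology s ∧ #s = c})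

/-!
Fix a point `x` of a T1 space and a family `𝒰` of at most `ψ` open sets with `⋂₀ 𝒰 = {x}`.
If `S` is discrete and `S ∪ {x}` is closed, every `S \ U` with `U ∈ 𝒰` is closed and discrete,
so it has at most `e` points; these sets cover `S \ {x}`, whence `|S| ≤ ψ · e`. For a suitable
set (`x = 1`) the subgroup `⟨S⟩` is dense of size at most `|S| · ℵ₀`, so `d(G) ≤ ψ · e`.
-/

lemma Subgroup.cardinalMk_closure_le_max {G : Type*} [Group G] (s : Set G) :
    #(Subgroup.closure s) ≤ max #s ℵ₀ := by
  rcases s.eq_empty_or_nonempty with rfl | hs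
  · simp
  · have : Nonempty s := hs.to_subtype
    rw [FreeGroup.closure_eq_range, ← mk_freeGroup]
    exact mk_range_le

section CardinalFunctions

variable {X : Type*} [TopologicalSpace X]

lemma densityCard_le_of_dense {s : Set X} (hs : Dense s) : densityCard X ≤ max ℵ₀ #s :=
  max_le_max le_rfl (csInf_le (OrderBot.bddBelow _) ⟨s, hs, rfl⟩)

lemma aleph0_le_extentCard : ℵ₀ ≤ extentCard X := le_max_left _ _

lemma mk_le_extentCard {s : Set X} (hs : IsClosed s) [DiscreteTopology s] :
    #s ≤ extentCard X := by
  have hbdd : BddAbove {c | ∃ s : Set X, IsClosed s ∧ DiscreteTopology s ∧ #s = c} :=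
    ⟨#X, by rintro _ ⟨t, -, -, rfl⟩; exact mk_set_le t⟩
  exact (le_csSup hbdd ⟨s, hs, ‹_›, rfl⟩).trans (le_max_right _ _)

variable [T1Space X]

lemma pseudoCharacter_mem :
    pseudoCharacter X ∈ {κ : Cardinal | ℵ₀ ≤ κ ∧ ∀ x : X, ∃ 𝒰 : Set (Set X),
      #𝒰 ≤ κ ∧ (∀ U ∈ 𝒰, IsOpen U) ∧ ⋂₀ 𝒰 = {x}} := by
  refine csInf_mem ⟨max ℵ₀ #X, le_max_left _ _, fun x => ?_⟩
  -- in a T1 space `{x}` is the intersection of the cofinite sets `{y}ᶜ`, `y ≠ x`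
  refine ⟨(fun y => {y}ᶜ) '' {x}ᶜ, mk_image_le.trans ((mk_set_le _).trans (le_max_right _ _)),
    ?_, ?_⟩
  · rintro _ ⟨y, -, rfl⟩
    exact isOpen_compl_singleton
  · ext z
    simp only [Set.sInter_image, Set.mem_iInter, Set.mem_compl_iff, Set.mem_singleton_iff]
    exact ⟨fun h => by_contra fun hzx => h z hzx rfl, fun hzx _ hy h => hy (h ▸ hzx)⟩

lemma aleph0_le_pseudoCharacter : ℵ₀ ≤ pseudoCharacter X := pseudoCharacter_mem.1

lemma pseudoCharacter_spec (x : X) : ∃ 𝒰 : Set (Set X),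
    #𝒰 ≤ pseudoCharacter X ∧ (∀ U ∈ 𝒰, IsOpen U) ∧ ⋂₀ 𝒰 = {x} :=
  pseudoCharacter_mem.2 x

lemma aleph0_le_pseudoCharacter_mul_extentCard : ℵ₀ ≤ pseudoCharacter X * extentCard X :=
  aleph0_le_pseudoCharacter.trans
    (Cardinal.le_mul_right (aleph0_pos.trans_le aleph0_le_extentCard).ne')

end CardinalFunctions

open Set in
lemma mk_le_pseudoCharacter_mul_extentCard {X : Type*} [TopologicalSpace X] [T1Space X]
    {S : Set X} {x : X} [DiscreteTopology S] (hS : IsClosed (S ∪ {x})) :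
    #S ≤ pseudoCharacter X * extentCard X := by
  obtain ⟨𝒰, h𝒰, h𝒰_open, h𝒰_inter⟩ := pseudoCharacter_spec x
  have hx : ∀ U ∈ 𝒰, x ∈ U := mem_sInter.1 (h𝒰_inter ▸ mem_singleton x)
  have hpiece : ∀ U ∈ 𝒰, #(S \ U : Set X) ≤ extentCard X := by
    intro U hU
    have : DiscreteTopology (S \ U : Set X) := .of_subset ‹_› sdiff_subset
    have hS_diff : S \ U = (S ∪ {x}) \ U := by
      rw [union_sdiff_distrib, sdiff_eq_empty.2 (singleton_subset_iff.2 (hx U hU)), union_empty]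
    exact mk_le_extentCard (hS_diff ▸ hS.sdiff (h𝒰_open U hU))
  have hcover : S ⊆ {x} ∪ ⋃ U ∈ 𝒰, S \ U := by
    intro s hs
    by_cases hsx : s = x
    · exact .inl hsx
    · have : s ∉ ⋂₀ 𝒰 := h𝒰_inter ▸ hsx
      obtain ⟨U, hU, hsU⟩ := by simpa only [mem_sInter, not_forall, exists_prop] using this
      exact .inr (mem_biUnion hU ⟨hs, hsU⟩)
  have hinf := aleph0_le_pseudoCharacter_mul_extentCard (X := X)
  calc #S ≤ #({x} ∪ ⋃ U ∈ 𝒰, S \ U : Set X) := mk_le_mk_of_subset hcover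
    _ ≤ 1 + #𝒰 * ⨆ U : 𝒰, #(S \ U : Set X) :=
      (mk_union_le _ _).trans (add_le_add (by simp) (mk_biUnion_le _ _))
    _ ≤ pseudoCharacter X * extentCard X :=
      add_le_of_le hinf (one_le_aleph0.trans hinf)
        (mul_le_mul' h𝒰 (ciSup_le' fun U => hpiece U U.2))

theorem stmt14_general {G : Type*} [Group G] [TopologicalSpace G] [T1Space G]
    (hG : ∃ S : Set G, IsSuitable S) :
    densityCard G ≤ pseudoCharacter G * extentCard G := by
  obtain ⟨S, hS_discrete, hS_closed, hS_dense⟩ := hG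
  have hS := mk_le_pseudoCharacter_mul_extentCard hS_closed
  have hinf := aleph0_le_pseudoCharacter_mul_extentCard (X := G)
  calc densityCard G ≤ max ℵ₀ #(Subgroup.closure S) := densityCard_le_of_dense hS_dense
    _ ≤ pseudoCharacter G * extentCard G :=
      max_le hinf ((Subgroup.cardinalMk_closure_le_max S).trans (max_le hS hinf))

theorem stmt14 {G : Type*} [Group G] [TopologicalSpace G] [ContinuousMul G] [T1Space G]
    (hG : ∃ S : Set G, IsSuitable S) :
    densityCard G ≤ pseudoCharacter G * extentCard G :=
  stmt14_general hG
end

section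
/- Let G = ⊕_{n≥1} C_n be the direct sum of the cyclic groups C_n = ℤ/nℤ, endowed with the semigroup topology whose neighborhood base at 0 consists of the sets O_f = {0} ∪ {x ∈ G : ∃ n, 0 < x(n) < f(n) and x(m) = 0 for all m > n}, where f ranges over non-decreasing unbounded functions ω\{0} → ω. Then the set S = {0} ∪ {-δ_m : m ≥ 2}, where δ_m is the element with 1 in coordinate m and 0 elsewhere, is a closed discrete subset of G which generates G. -/
/-- The direct sum `⊕_{n ≥ 1} ℤ/nℤ`. -/
abbrev Gds : Type := Π₀ n : ℕ+, ZMod n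

/-- The basic neighborhood of `0` associated with `f`. -/
def Of (f : ℕ+ → ℕ) : Set Gds :=
  {0} ∪ {x : Gds | ∃ n : ℕ+, 0 < (x n).val ∧ (x n).val < f n ∧ ∀ m : ℕ+, n < m → x m = 0}

/-- The set `S = {0} ∪ {-δ_m : m ≥ 2}`. -/
def Sds : Set Gds :=
  {0} ∪ {x : Gds | ∃ m : ℕ+, 2 ≤ m ∧ x = -(DFinsupp.single m (1 : ZMod m))}

/-!
Every `x ∈ G` vanishes beyond some coordinate `K ≥ 1`. A nonzero `y ∈ O_f` for `f n = n - K` has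
a coordinate `n > K` with `0 < y(n) < n - K`, so `(x + y)(n) = y(n)` has value neither `0` nor
`n - 1`, whereas every element of `S` has all its coordinates of value `0` or `n - 1`. Hence
`x + O_f` meets `S` at most in `x`, which makes `S` closed and discrete. Since `δ_1 = 0`, the
elements `δ_n` and therefore all `single n b = b • δ_n` lie in the subgroup generated by `S`.
-/

open Filter Topology

theorem disjoint_nhdsNE_principal_of_inter_subset {X : Type*} [TopologicalSpace X] {x : X}
    {U s : Set X} (hU : U ∈ 𝓝 x) (hUs : U ∩ s ⊆ {x}) : Disjoint (𝓝[≠] x) (𝓟 s) :=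
  disjoint_principal_right.2 <| mem_nhdsWithin_iff_exists_mem_nhds_inter.2
    ⟨U, hU, fun _ ⟨hyU, hyx⟩ hys => hyx (hUs ⟨hyU, hys⟩)⟩

theorem DFinsupp.exists_forall_lt_apply_eq_zero {ι : Type*} [LinearOrder ι] [Nonempty ι]
    {β : ι → Type*} [∀ i, Zero (β i)] (x : Π₀ i, β i) : ∃ K, ∀ m, K < m → x m = 0 := by
  classical
  obtain ⟨K, hK⟩ := x.support.bddAbove
  exact ⟨K, fun m hm => by_contra fun hxm => hm.not_ge (hK (DFinsupp.mem_support_iff.2 hxm))⟩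

theorem monotone_sub_const (K : ℕ) : Monotone fun n : ℕ+ => (n : ℕ) - K :=
  fun _ _ h => Nat.sub_le_sub_right h K

theorem exists_lt_sub_const (K k : ℕ) : ∃ n : ℕ+, k < (n : ℕ) - K :=
  ⟨⟨K + k + 1, by omega⟩, by simp only [PNat.mk_coe]; omega⟩

theorem val_apply_of_mem_Sds {z : Gds} (hz : z ∈ Sds) (n : ℕ+) :
    (z n).val = 0 ∨ (z n).val = n - 1 := by
  rcases hz with rfl | ⟨m, -, rfl⟩
  · simp
  rcases eq_or_ne m n with rfl | hmn
  · right
    obtain ⟨k, hk⟩ : ∃ k, (m : ℕ) = k + 1 := ⟨m.natPred, m.natPred_add_one.symm⟩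
    simp only [DFinsupp.neg_apply, DFinsupp.single_eq_same]
    rw [hk]
    exact ZMod.val_neg_one k
  · simp [DFinsupp.single_eq_of_ne hmn.symm]

theorem add_image_Of_inter_Sds_subset (x : Gds) (K : ℕ+) (hx : ∀ m, K < m → x m = 0) :
    (x + ·) '' Of (fun n => (n : ℕ) - K) ∩ Sds ⊆ {x} := by
  rintro _ ⟨⟨y, hy, rfl⟩, hS⟩
  rcases hy with rfl | ⟨n, hpos, hlt, -⟩
  · simp
  exfalso
  replace hlt : (y n).val < n - K := hlt
  have hKn : K < n := PNat.coe_lt_coe _ _ |>.1 (by omega)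
  have hxy : (x + y) n = y n := by simp [hx n hKn]
  have hS_val := val_apply_of_mem_Sds hS n
  rw [hxy] at hS_val
  have := K.pos
  omega

theorem single_one_mem_closure_Sds (i : ℕ+) :
    DFinsupp.single i (1 : ZMod i) ∈ AddSubgroup.closure Sds := by
  rcases eq_or_ne i 1 with rfl | hi
  · have : Subsingleton (ZMod (1 : ℕ+)) := ZMod.subsingleton_iff.2 rfl
    rw [Subsingleton.elim (1 : ZMod (1 : ℕ+)) 0, DFinsupp.single_zero]
    exact zero_mem _
  · have h2 : 2 ≤ i := lt_of_le_of_ne one_le hi.symm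
    simpa using neg_mem (AddSubgroup.subset_closure (k := Sds) (Or.inr ⟨i, h2, rfl⟩))

theorem closure_Sds_eq_top : AddSubgroup.closure Sds = ⊤ := by
  have hsingle : ⋃ i, Set.range (DFinsupp.single (β := fun n : ℕ+ => ZMod n) i) ⊆
      (AddSubgroup.closure Sds).toAddSubmonoid := by
    refine Set.iUnion_subset fun i => Set.range_subset_iff.2 fun b => ?_
    have hb : DFinsupp.single i b =
        b.val • DFinsupp.single (β := fun n : ℕ+ => ZMod n) i 1 := by
      rw [← DFinsupp.single_smul, nsmul_one, ZMod.natCast_zmod_val]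
    rw [SetLike.mem_coe, AddSubgroup.mem_toAddSubmonoid, hb]
    exact nsmul_mem (single_one_mem_closure_Sds i) _
  refine eq_top_iff.2 fun x _ => AddSubmonoid.closure_le.2 hsingle ?_
  simp

theorem stmt16 (τ : TopologicalSpace Gds)
    -- the topology has, at each point `x`, the neighborhood base `{x + O_f}` where `f`
    -- ranges over non-decreasing unbounded functions (translation-invariant semigroup
    -- topology with neighborhood base `{O_f}` at `0`):
    (hτ : ∀ x : Gds, (@nhds Gds τ x).HasBasis
      (fun f : ℕ+ → ℕ => Monotone f ∧ ∀ k : ℕ, ∃ n : ℕ+, k < f n)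
      (fun f => (x + ·) '' Of f)) :
    @IsClosed Gds τ Sds ∧
    @DiscreteTopology Sds (@instTopologicalSpaceSubtype Gds (· ∈ Sds) τ) ∧
    AddSubgroup.closure Sds = ⊤ := by
  let := τ
  have hS (x : Gds) : Disjoint (𝓝[≠] x) (𝓟 Sds) := by
    obtain ⟨K, hK⟩ := x.exists_forall_lt_apply_eq_zero
    exact disjoint_nhdsNE_principal_of_inter_subset
      ((hτ x).mem_of_mem ⟨monotone_sub_const K, exists_lt_sub_const K⟩)
      (add_image_Of_inter_Sds_subset x K hK)
  obtain ⟨hclosed, hdiscrete⟩ := isClosed_and_discrete_iff.2 hS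
  exact ⟨hclosed, isDiscrete_iff_discreteTopology.1 hdiscrete, closure_Sds_eq_top⟩
end

section
/- Let Γ = {G_i : i ∈ I} be a non-empty family of T1 paratopological groups each of which has a suitable set. Then the product ∏_{i∈I} G_i has a suitable set contained in the σ-product (the subgroup of elements with finitely many non-identity coordinates). -/
/-!
Embed each `S i \ {1}` along its coordinate axis by `Pi.mulSingle i` and take the union `S`.
A point `Pi.mulSingle i s` of `S` is isolated by `{y | y i ∈ V, y i ≠ 1}`, where `V` isolates `s`
in `S i`; this set is open because `{1}` is closed in the T₁ space `G i`. The set `S ∪ {1}`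
consists of the points whose coordinates lie in `S i ∪ {1}` and which have at most one
nontrivial coordinate, an intersection of two closed sets. Finally `⟨S⟩` contains every finitely
supported point with coordinates in `⟨S i⟩`, and these are dense in every basic open set.
-/

open Set Function

theorem IsSuitable.sdiff_one {G : Type*} [Group G] [TopologicalSpace G] {S : Set G}
    (hS : IsSuitable S) : IsSuitable (S \ {1}) := by
  obtain ⟨hdisc, hclosed, hdense⟩ := hS
  refine ⟨hdisc.of_subset sdiff_subset, ?_, ?_⟩
  · rwa [sdiff_union_self]
  · rwa [Subgroup.closure_sdiff_one]

section AxisUnion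

variable {ι : Type*} {G : ι → Type*}

theorem isClosed_setOf_subsingleton_ne_one [∀ i, One (G i)] [∀ i, TopologicalSpace (G i)]
    [∀ i, T1Space (G i)] :
    IsClosed {y : ∀ i, G i | {i | y i ≠ 1}.Subsingleton} := by
  have : {y : ∀ i, G i | {i | y i ≠ 1}.Subsingleton} =
      ⋂ i, ⋂ j, ⋂ (_ : i ≠ j), (fun y => y i) ⁻¹' {1} ∪ (fun y => y j) ⁻¹' {1} := by
    ext y
    simp only [Set.Subsingleton, mem_ofPred_eq, mem_iInter, mem_union, mem_preimage,
      mem_singleton_iff]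
    grind
  rw [this]
  exact isClosed_iInter fun i => isClosed_iInter fun j => isClosed_iInter fun _ =>
    (isClosed_singleton.preimage (continuous_apply i)).union
      (isClosed_singleton.preimage (continuous_apply j))

variable [DecidableEq ι]

theorem setOf_mulSingle_ne_one_subset [∀ i, One (G i)] (i : ι) (a : G i) :
    {j | Pi.mulSingle i a j ≠ 1} ⊆ {i} :=
  fun _ hj => by_contra fun hji => hj (Pi.mulSingle_eq_of_ne hji a)

theorem iUnion_mulSingle_image_subset_setOf_finite [∀ i, One (G i)] (S : ∀ i, Set (G i)) :
    (⋃ i, Pi.mulSingle i '' S i) ⊆ {x : ∀ i, G i | {i : ι | x i ≠ 1}.Finite} := by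
  rintro _ ⟨_, ⟨i, rfl⟩, s, -, rfl⟩
  exact (finite_singleton i).subset (setOf_mulSingle_ne_one_subset i s)

theorem iUnion_mulSingle_image_union_one [∀ i, One (G i)] (S : ∀ i, Set (G i)) :
    (⋃ i, Pi.mulSingle i '' S i) ∪ {1} =
      univ.pi (fun i => S i ∪ {1}) ∩ {y | {i | y i ≠ 1}.Subsingleton} := by
  ext y
  constructor
  · rintro (⟨_, ⟨i, rfl⟩, s, hs, rfl⟩ | rfl)
    · refine ⟨fun j _ => ?_, subsingleton_singleton.anti (setOf_mulSingle_ne_one_subset i s)⟩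
      rcases eq_or_ne j i with rfl | hji
      · simp [hs]
      · simp [hji]
    · simp
  · rintro ⟨hmem, hsupp⟩
    rcases {i | y i ≠ 1}.eq_empty_or_nonempty with hempty | ⟨i, hi⟩
    · exact Or.inr (funext fun i => not_not.1 fun hi => hempty.subset hi)
    · have hyi : y i ∈ S i := (hmem i trivial).resolve_right hi
      refine Or.inl (mem_iUnion.2 ⟨i, y i, hyi, funext fun j => ?_⟩)
      rcases eq_or_ne j i with rfl | hji
      · simp
      · rw [Pi.mulSingle_eq_of_ne hji]
        exact (not_not.1 fun hj => hji (hsupp hj hi)).symm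

theorem mulSingle_mem_closure_iUnion_mulSingle_image [∀ i, Group (G i)] {S : ∀ i, Set (G i)}
    {i : ι} {g : G i} (hg : g ∈ Subgroup.closure (S i)) :
    Pi.mulSingle i g ∈ Subgroup.closure (⋃ i, Pi.mulSingle i '' S i) := by
  have hle : (Subgroup.closure (S i)).map (MonoidHom.mulSingle G i) ≤
      Subgroup.closure (⋃ i, Pi.mulSingle i '' S i) := by
    rw [MonoidHom.map_closure]
    exact Subgroup.closure_mono (subset_iUnion_of_subset i subset_rfl)
  exact hle ⟨g, hg, rfl⟩

variable [∀ i, TopologicalSpace (G i)]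

theorem isClosed_iUnion_mulSingle_image_union_one [∀ i, One (G i)] [∀ i, T1Space (G i)]
    {S : ∀ i, Set (G i)} (hS : ∀ i, IsClosed (S i ∪ {1})) :
    IsClosed ((⋃ i, Pi.mulSingle i '' S i) ∪ {1}) := by
  rw [iUnion_mulSingle_image_union_one]
  exact (isClosed_set_pi fun i _ => hS i).inter isClosed_setOf_subsingleton_ne_one

theorem discreteTopology_iUnion_mulSingle_image [∀ i, One (G i)] [∀ i, T1Space (G i)]
    {S : ∀ i, Set (G i)} (hS : ∀ i, DiscreteTopology (S i)) (h1 : ∀ i, (1 : G i) ∉ S i) :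
    DiscreteTopology (⋃ i, Pi.mulSingle i '' S i) := by
  rw [discreteTopology_subtype_iff']
  rintro _ ⟨_, ⟨i, rfl⟩, s, hs, rfl⟩
  obtain ⟨V, hV, hVS⟩ := discreteTopology_subtype_iff'.1 (hS i) s hs
  have hs1 : s ≠ 1 := fun h => h1 i (h ▸ hs)
  refine ⟨(fun y => y i) ⁻¹' (V \ {1}), (hV.sdiff isClosed_singleton).preimage
    (continuous_apply i), Subset.antisymm ?_ ?_⟩
  · rintro _ ⟨⟨htV, hti⟩, _, ⟨j, rfl⟩, t, ht, rfl⟩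
    rcases eq_or_ne i j with rfl | hij
    · have : t ∈ V ∩ S i := ⟨by simpa using htV, ht⟩
      rw [hVS, mem_singleton_iff] at this
      rw [this, mem_singleton_iff]
    · exact absurd (Pi.mulSingle_eq_of_ne hij t) hti
  · rintro _ rfl
    have hsV : s ∈ V := (hVS.ge (mem_singleton s)).1
    exact ⟨by simp [hsV, hs1], mem_iUnion.2 ⟨i, s, hs, rfl⟩⟩

theorem dense_closure_iUnion_mulSingle_image [∀ i, Group (G i)] {S : ∀ i, Set (G i)}
    (hS : ∀ i, Dense (Subgroup.closure (S i) : Set (G i))) :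
    Dense (Subgroup.closure (⋃ i, Pi.mulSingle i '' S i) : Set (∀ i, G i)) := by
  refine dense_iff_inter_open.2 fun U hU ⟨x, hx⟩ => ?_
  obtain ⟨I, u, hu, hIu⟩ := isOpen_pi_iff.1 hU x hx
  have hpick : ∀ i ∈ I, ∃ g ∈ u i, g ∈ Subgroup.closure (S i) := fun i hi =>
    (hS i).inter_open_nonempty (u i) (hu i hi).1 ⟨x i, (hu i hi).2⟩
  choose! g hgu hgS using hpick
  refine ⟨I.piecewise g 1, hIu fun i hi => ?_, ?_⟩
  · simpa [Finset.piecewise_eq_of_mem _ _ _ hi] using hgu i hi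
  · refine Submonoid.pi_mem_of_mulSingle_mem_aux I _
      (fun i hi => Finset.piecewise_eq_of_notMem _ _ _ hi) fun i hi => ?_
    rw [Finset.piecewise_eq_of_mem _ _ _ hi]
    exact mulSingle_mem_closure_iUnion_mulSingle_image (hgS i hi)

theorem IsSuitable.iUnion_mulSingle_image [∀ i, Group (G i)] [∀ i, T1Space (G i)]
    {S : ∀ i, Set (G i)} (hS : ∀ i, IsSuitable (S i)) (h1 : ∀ i, (1 : G i) ∉ S i) :
    IsSuitable (⋃ i, Pi.mulSingle i '' S i) :=
  ⟨discreteTopology_iUnion_mulSingle_image (fun i => (hS i).1) h1,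
    isClosed_iUnion_mulSingle_image_union_one fun i => (hS i).2.1,
    dense_closure_iUnion_mulSingle_image fun i => (hS i).2.2⟩

end AxisUnion

theorem stmt19_general {ι : Type*} (G : ι → Type*)
    [∀ i, Group (G i)] [∀ i, TopologicalSpace (G i)]
    [∀ i, T1Space (G i)]
    (hG : ∀ i, ∃ S : Set (G i), IsSuitable S) :
    ∃ S : Set (∀ i, G i), IsSuitable S ∧
      S ⊆ {x : ∀ i, G i | {i : ι | x i ≠ 1}.Finite} := by
  classical
  choose S hS using hG
  exact ⟨⋃ i, Pi.mulSingle i '' (S i \ {1}),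
    IsSuitable.iUnion_mulSingle_image (fun i => (hS i).sdiff_one) (fun i => by simp),
    iUnion_mulSingle_image_subset_setOf_finite _⟩

theorem stmt19 {ι : Type*} [Nonempty ι] (G : ι → Type*)
    [∀ i, Group (G i)] [∀ i, TopologicalSpace (G i)]
    [∀ i, ContinuousMul (G i)] [∀ i, T1Space (G i)]
    (hG : ∀ i, ∃ S : Set (G i), IsSuitable S) :
    ∃ S : Set (∀ i, G i), IsSuitable S ∧
      S ⊆ {x : ∀ i, G i | {i : ι | x i ≠ 1}.Finite} :=
  stmt19_general G hG
end
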